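/- arXiv:1803.02966 — 7 statements merged into one kernel-verified Lean document; each statement's English description precedes it below -/
import Mathlib

section
/- For every prime p > 3, the harmonic number H_{p-1} = ∑_{j=1}^{p-1} 1/j, viewed as a rational number, has numerator divisible by p² (equivalently, H_{p-1} ≡ 0 (mod p²) in the sense that its p-adic valuation is at least 2). -/
open Finset

/-- Harmonic number `H n = ∑_{j=1}^n 1/j`. -/
def H (n : ℕ) : ℚ := ∑ j ∈ Finset.Icc 1 n, (1 : ℚ) / j

/-- Generalized harmonic number `H_n^{(α)} = ∑_{i=1}^n 1/i^α`. -/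
def Hgen (n α : ℕ) : ℚ := ∑ i ∈ Finset.Icc 1 n, (1 : ℚ) / (i : ℚ) ^ α

/-- `S m = ∑_{r=0}^m C(m+1,r) B_r B_{m-r}`. -/
def S (m : ℕ) : ℚ := ∑ r ∈ Finset.range (m + 1),
  ((m + 1).choose r : ℚ) * bernoulli r * bernoulli (m - r)

/-!
Pairing `j` with `p - j` gives `1/j + 1/(p - j) = p/(j (p - j))`, so `2 H_{p-1} = p T` with
`T = ∑ 1/(j (p - j))`. Modulo `p`, `T ≡ -∑ 1/j² = -∑_{x ∈ 𝔽_p} x²`, which vanishes because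
`p - 1 ∤ 2` for `p > 3`; hence `H_{p-1} ≡ 0` in `ZMod (p²)`. As every `j < p` is invertible
modulo `p²`, this congruence of residues transfers to the numerator of the rational number.
-/

namespace ZMod

theorem sum_Icc_natCast_eq_sum_univ {M : Type*} [AddCommMonoid M] {n : ℕ} [NeZero n]
    (f : ZMod n → M) (hf : f 0 = 0) : ∑ j ∈ Icc 1 (n - 1), f j = ∑ x : ZMod n, f x := by
  have hinj : Set.InjOn (Nat.cast : ℕ → ZMod n) (Icc 1 (n - 1)) := by
    intro a ha b hb hab
    simp only [coe_Icc, Set.mem_Icc] at ha hb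
    rw [ZMod.natCast_eq_natCast_iff', Nat.mod_eq_of_lt (by omega), Nat.mod_eq_of_lt (by omega)]
      at hab
    exact hab
  rw [← sum_image hinj]
  refine sum_subset (subset_univ _) fun x _ hx => ?_
  obtain rfl : x = 0 := by
    by_contra hx0
    refine hx (mem_image.2 ⟨x.val, mem_Icc.2 ⟨?_, ?_⟩, natCast_zmod_val x⟩)
    · exact Nat.one_le_iff_ne_zero.2 ((val_ne_zero x).2 hx0)
    · exact Nat.le_sub_one_of_lt (val_lt x)
  exact hf

theorem natCast_mul_eq_zero_of_castHom_eq_zero {m n : ℕ} (x : ZMod (m * n))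
    (hx : castHom (dvd_mul_left n m) (ZMod n) x = 0) : (m : ZMod (m * n)) * x = 0 := by
  obtain ⟨k, rfl⟩ := intCast_surjective x
  rw [map_intCast, intCast_zmod_eq_zero_iff_dvd] at hx
  rw [← Int.cast_natCast, ← Int.cast_mul, intCast_zmod_eq_zero_iff_dvd, Nat.cast_mul]
  exact mul_dvd_mul_left _ hx

theorem map_inv_of_isUnit {n : ℕ} {K : Type*} [DivisionRing K] (f : ZMod n →+* K)
    {a : ZMod n} (ha : IsUnit a) : f a⁻¹ = (f a)⁻¹ :=
  eq_inv_of_mul_eq_one_right (by rw [← map_mul, mul_inv_of_unit a ha, map_one])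

theorem inv_add_inv_of_isUnit {n : ℕ} {a b : ZMod n} (ha : IsUnit a) (hb : IsUnit b) :
    a⁻¹ + b⁻¹ = (a + b) * (a⁻¹ * b⁻¹) := by
  linear_combination (-b⁻¹) * mul_inv_of_unit a ha + (-a⁻¹) * mul_inv_of_unit b hb

end ZMod

theorem FiniteField.sum_inv_pow_eq_zero {K : Type*} [Field K] [Fintype K] {i : ℕ}
    (hi : i < Fintype.card K - 1) : ∑ x : K, x⁻¹ ^ i = 0 :=
  (Equiv.sum_comp (Equiv.inv K) (· ^ i)).trans (sum_pow_lt_card_sub_one K i hi)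

theorem ZMod.sum_Icc_inv_sq_eq_zero {p : ℕ} [Fact p.Prime] (hp : 3 < p) :
    ∑ j ∈ Icc 1 (p - 1), (j : ZMod p)⁻¹ ^ 2 = 0 := by
  rw [sum_Icc_natCast_eq_sum_univ (fun x : ZMod p => x⁻¹ ^ 2) (by simp)]
  exact FiniteField.sum_inv_pow_eq_zero (by rw [ZMod.card]; omega)

theorem ZMod.isUnit_natCast_mul_self_of_mem_Icc {p j : ℕ} (hp : p.Prime) (hj : j ∈ Icc 1 (p - 1)) :
    IsUnit (j : ZMod (p * p)) := by
  rw [mem_Icc] at hj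
  have h := (Nat.coprime_of_lt_prime (by omega : j ≠ 0) (by omega : j < p) hp).symm
  exact (isUnit_iff_coprime _ _).2 (h.mul_right h)

/-- **Wolstenholme's theorem**, in `ZMod (p * p)`. -/
theorem ZMod.sum_Icc_inv_eq_zero {p : ℕ} [hp : Fact p.Prime] (hp3 : 3 < p) :
    ∑ j ∈ Icc 1 (p - 1), (j : ZMod (p * p))⁻¹ = 0 := by
  have hunit : ∀ j ∈ Icc 1 (p - 1), IsUnit (j : ZMod (p * p)) := fun _ =>
    isUnit_natCast_mul_self_of_mem_Icc hp.out
  have hreflect : ∀ j ∈ Icc 1 (p - 1), p - j ∈ Icc 1 (p - 1) := by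
    simp only [mem_Icc]
    omega
  have hsub : ∀ j ∈ Icc 1 (p - 1), p - (p - j) = j := by
    simp only [mem_Icc]
    omega
  have hle : ∀ j ∈ Icc 1 (p - 1), j ≤ p := by
    simp only [mem_Icc]
    omega
  set T := ∑ j ∈ Icc 1 (p - 1), (j : ZMod (p * p))⁻¹ * ((p - j : ℕ) : ZMod (p * p))⁻¹
  have hpair : 2 * ∑ j ∈ Icc 1 (p - 1), (j : ZMod (p * p))⁻¹ = p * T := by
    have hflip : ∑ j ∈ Icc 1 (p - 1), ((p - j : ℕ) : ZMod (p * p))⁻¹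
        = ∑ j ∈ Icc 1 (p - 1), (j : ZMod (p * p))⁻¹ :=
      sum_nbij' (p - ·) (p - ·) hreflect hreflect hsub hsub fun _ _ => rfl
    rw [two_mul]
    nth_rewrite 2 [← hflip]
    rw [← sum_add_distrib, mul_sum]
    refine sum_congr rfl fun j hj => ?_
    rw [inv_add_inv_of_isUnit (hunit j hj) (hunit _ (hreflect j hj)), Nat.cast_sub (hle j hj),
      add_sub_cancel]
  -- modulo `p`, `1 / (j (p - j))` is `-1 / j ^ 2`
  have hT : castHom (dvd_mul_left p p) (ZMod p) T = 0 := by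
    rw [map_sum, ← neg_eq_zero, ← sum_neg_distrib, ← sum_Icc_inv_sq_eq_zero hp3]
    refine sum_congr rfl fun j hj => ?_
    rw [map_mul, map_inv_of_isUnit _ (hunit j hj), map_inv_of_isUnit _ (hunit _ (hreflect j hj)),
      map_natCast, map_natCast, Nat.cast_sub (hle j hj), natCast_self, zero_sub, inv_neg, mul_neg,
      neg_neg, sq]
  have h2 : IsUnit (2 : ZMod (p * p)) := by
    exact_mod_cast hunit 2 (mem_Icc.2 ⟨one_le_two, by omega⟩)
  rw [← h2.mul_right_eq_zero, hpair, natCast_mul_eq_zero_of_castHom_eq_zero T hT]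

theorem Rat.dvd_num_sum_one_div {ι : Type*} (s : Finset ι) (a : ι → ℕ) {m : ℕ}
    (ha : ∀ i ∈ s, IsUnit (a i : ZMod m)) (hsum : ∑ i ∈ s, (a i : ZMod m)⁻¹ = 0) :
    (m : ℤ) ∣ (∑ i ∈ s, 1 / (a i : ℚ)).num := by
  classical
  rcases eq_or_ne m 1 with rfl | hm
  · simp
  have : Nontrivial (ZMod m) := ZMod.nontrivial_iff.2 hm
  set q := ∑ i ∈ s, 1 / (a i : ℚ)
  set P := ∏ i ∈ s, a i
  set A := ∑ i ∈ s, ∏ j ∈ s.erase i, a j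
  have hqP : q * P = A := by
    simp only [q, P, A, sum_mul, Nat.cast_sum, Nat.cast_prod]
    refine sum_congr rfl fun i hi => ?_
    have hai : (a i : ℚ) ≠ 0 := by
      rintro h
      exact not_isUnit_zero (M₀ := ZMod m) (by simpa [Nat.cast_eq_zero.1 h] using ha i hi)
    rw [← mul_prod_erase s _ hi]
    field_simp
  have hnum : q.num * P = q.den * A := by
    have h := Rat.num_div_den q
    rw [← h] at hqP
    field_simp at hqP
    exact_mod_cast hqP
  have hA : (A : ZMod m) = 0 := by
    rw [Nat.cast_sum, ← zero_mul (P : ZMod m), ← hsum, sum_mul]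
    refine sum_congr rfl fun i hi => ?_
    simp only [P, Nat.cast_prod]
    rw [← mul_prod_erase s _ hi, ← mul_assoc,
      ZMod.inv_mul_of_unit _ (ha i hi), one_mul]
  have hP : IsUnit (P : ZMod m) := by
    rw [Nat.cast_prod]
    exact IsUnit.prod_iff.2 ha
  have := congrArg (Int.cast : ℤ → ZMod m) hnum
  push_cast at this
  rw [hA, mul_zero, hP.mul_left_eq_zero] at this
  exact (ZMod.intCast_zmod_eq_zero_iff_dvd _ _).1 this

theorem stmt0 (p : ℕ) (hp : p.Prime) (hp3 : 3 < p) :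
    (p : ℤ) ^ 2 ∣ (H (p - 1)).num := by
  have : Fact p.Prime := ⟨hp⟩
  rw [sq, ← Nat.cast_mul]
  exact Rat.dvd_num_sum_one_div _ (fun j => j) (fun _ => ZMod.isUnit_natCast_mul_self_of_mem_Icc hp)
    (ZMod.sum_Icc_inv_eq_zero hp3)
end

section
/- For all positive integers m and p, ∑_{k=1}^{p-1} k^m · H_k = (H_{p-1}/(m+1)) · ∑_{r=0}^m C(m+1,r) B_r p^{m+1-r} − (p−1) B_m − (1/(m+1)) ∑_{r=0}^{m-1} ∑_{λ=0}^{m-r} [C(m+1,r) C(m+1−r,λ)/(m+1−r)] B_r B_λ p^{m+1−r−λ}, as an identity of rational numbers. -/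
open Finset

/-
Summation by parts against `H_k = ∑_{j ≤ k} 1/j` gives
`∑_{k<p} k^m H_k = H_{p-1} S_m(p) - ∑_{0<j<p} S_m(j)/j`, where `S_m(j) = ∑_{k<j} k^m`.
By Faulhaber's formula `S_m(j)/j = ∑_r C(m+1,r) B_r j^{m-r}/(m+1)` is a polynomial in `j`, so the
second sum is again a combination of power sums, to which Faulhaber's formula applies once more;
its constant term `B_m` (the case `r = m`) contributes `(p-1) B_m`.
-/

theorem sum_Icc_mul_sum_Icc_comm {R : Type*} [CommSemiring R] (n : ℕ) (f g : ℕ → R) :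
    ∑ k ∈ Icc 1 n, f k * ∑ j ∈ Icc 1 k, g j = ∑ j ∈ Icc 1 n, g j * ∑ k ∈ Icc j n, f k := by
  simp_rw [mul_sum]
  rw [sum_comm' (t' := Icc 1 n) (s' := fun j => Icc j n)]
  · exact sum_congr rfl fun _ _ => sum_congr rfl fun _ _ => mul_comm _ _
  · intro k j
    simp only [mem_Icc]
    omega

theorem sum_Icc_mul_harmonic (n : ℕ) (f : ℕ → ℚ) :
    ∑ k ∈ Icc 1 n, f k * H k
      = H n * ∑ k ∈ range (n + 1), f k - ∑ j ∈ Icc 1 n, (∑ k ∈ range j, f k) / j := by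
  have tail : ∀ j ∈ Icc 1 n,
      ∑ k ∈ Icc j n, f k = ∑ k ∈ range (n + 1), f k - ∑ k ∈ range j, f k := by
    intro j hj
    rw [mem_Icc] at hj
    rw [← Ico_add_one_right_eq_Icc, sum_Ico_eq_sub _ (by omega)]
  simp only [H]
  rw [sum_Icc_mul_sum_Icc_comm, sum_congr rfl fun j hj => by rw [tail j hj], sum_mul,
    ← sum_sub_distrib]
  refine sum_congr rfl fun j _ => ?_
  ring

theorem sum_range_pow_div (m j : ℕ) (hj : j ≠ 0) :
    (∑ k ∈ range j, (k : ℚ) ^ m) / j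
      = ∑ r ∈ range (m + 1), bernoulli r * (m + 1).choose r / (m + 1) * (j : ℚ) ^ (m - r) := by
  rw [sum_range_pow, sum_div]
  refine sum_congr rfl fun r hr => ?_
  rw [Nat.sub_add_comm (Nat.lt_succ_iff.mp (mem_range.mp hr)), pow_succ]
  field_simp

theorem sum_Icc_sum_range_pow_div (m n : ℕ) :
    ∑ j ∈ Icc 1 n, (∑ k ∈ range j, (k : ℚ) ^ m) / j
      = ∑ r ∈ range (m + 1),
          bernoulli r * (m + 1).choose r / (m + 1) * ∑ j ∈ Icc 1 n, (j : ℚ) ^ (m - r) := by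
  rw [sum_congr rfl fun j hj => sum_range_pow_div m j (by rw [mem_Icc] at hj; omega), sum_comm]
  simp_rw [mul_sum]

theorem sum_Icc_pow (n e : ℕ) (he : e ≠ 0) :
    ∑ j ∈ Icc 1 n, (j : ℚ) ^ e
      = ∑ l ∈ range (e + 1),
          bernoulli l * (e + 1).choose l * ((n + 1 : ℕ) : ℚ) ^ (e + 1 - l) / (e + 1) := by
  rw [← sum_range_pow, sum_range_succ', ← Ico_add_one_right_eq_Icc, sum_Ico_eq_sum_range]
  simp [zero_pow he, add_comm]

theorem stmt4_general (m p : ℕ) (hp : 0 < p) :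
    ∑ k ∈ Finset.Icc 1 (p - 1), (k : ℚ) ^ m * H k =
      H (p - 1) / (m + 1) *
        ∑ r ∈ Finset.range (m + 1), ((m + 1).choose r : ℚ) * bernoulli r * (p : ℚ) ^ (m + 1 - r)
      - ((p : ℚ) - 1) * bernoulli m
      - 1 / (m + 1) *
        ∑ r ∈ Finset.range m, ∑ l ∈ Finset.range (m - r + 1),
          (((m + 1).choose r : ℚ) * ((m + 1 - r).choose l : ℚ) / ((m : ℚ) + 1 - r)) *
            bernoulli r * bernoulli l * (p : ℚ) ^ (m + 1 - r - l) := by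
  obtain ⟨n, rfl⟩ : ∃ n, p = n + 1 := ⟨p - 1, by omega⟩
  have last_term : bernoulli m * (m + 1).choose m / (m + 1) * ∑ j ∈ Icc 1 n, (j : ℚ) ^ (m - m)
      = n * bernoulli m := by
    simp only [Nat.choose_succ_self_right, Nat.cast_add, Nat.cast_one, tsub_self, pow_zero,
      sum_const, Nat.card_Icc, add_tsub_cancel_right, nsmul_eq_mul, mul_one]
    field_simp
  have lower_terms : ∀ r ∈ range m,
      bernoulli r * (m + 1).choose r / (m + 1) * ∑ j ∈ Icc 1 n, (j : ℚ) ^ (m - r)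
        = 1 / (m + 1) * ∑ l ∈ range (m - r + 1),
          (((m + 1).choose r : ℚ) * ((m + 1 - r).choose l : ℚ) / ((m : ℚ) + 1 - r)) *
            bernoulli r * bernoulli l * ((n + 1 : ℕ) : ℚ) ^ (m + 1 - r - l) := by
    intro r hr
    have hrm : r < m := mem_range.mp hr
    rw [sum_Icc_pow n (m - r) (by omega), mul_sum, mul_sum]
    refine sum_congr rfl fun l _ => ?_
    rw [show m + 1 - r = m - r + 1 by omega]
    push_cast [Nat.cast_sub hrm.le]
    field_simp
    ring
  have faulhaber : ∑ k ∈ range (n + 1), (k : ℚ) ^ m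
      = 1 / (m + 1) * ∑ r ∈ range (m + 1),
          ((m + 1).choose r : ℚ) * bernoulli r * ((n + 1 : ℕ) : ℚ) ^ (m + 1 - r) := by
    rw [sum_range_pow, mul_sum]
    exact sum_congr rfl fun _ _ => by ring
  rw [Nat.add_sub_cancel, sum_Icc_mul_harmonic, faulhaber, sum_Icc_sum_range_pow_div,
    sum_range_succ fun r =>
      bernoulli r * (m + 1).choose r / (m + 1) * ∑ j ∈ Icc 1 n, (j : ℚ) ^ (m - r),
    last_term, sum_congr rfl lower_terms, ← mul_sum]
  push_cast
  ring

theorem stmt4 (m p : ℕ) (hm : 0 < m) (hp : 0 < p) :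
    ∑ k ∈ Finset.Icc 1 (p - 1), (k : ℚ) ^ m * H k =
      H (p - 1) / (m + 1) *
        ∑ r ∈ Finset.range (m + 1), ((m + 1).choose r : ℚ) * bernoulli r * (p : ℚ) ^ (m + 1 - r)
      - ((p : ℚ) - 1) * bernoulli m
      - 1 / (m + 1) *
        ∑ r ∈ Finset.range m, ∑ l ∈ Finset.range (m - r + 1),
          (((m + 1).choose r : ℚ) * ((m + 1 - r).choose l : ℚ) / ((m : ℚ) + 1 - r)) *
            bernoulli r * bernoulli l * (p : ℚ) ^ (m + 1 - r - l) :=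
  stmt4_general m p hp
end

section
/- Let m > 0 be an odd integer with m ≠ 3. Then (2/(m+1)) ∑_{r=0}^{m} ∑_{λ=0}^{m-r} [C(m+1,r) C(m+1−r,λ)/(m+1−r)] B_r B_λ B_{m−r−λ} + (1/(m+1)) ∑_{r=0}^{m-1} C(m+1,r) B_r B_{m−1−r} = −((m+2)/(2m)) ∑_{r=0}^{m-1} C(m,r) B_r B_{m−1−r} + (1/4) ∑_{r=0}^{m-1} B_r B_{m−1−r}, as an identity of rationals. -/
open Finset

/-! The inner sum over `l` is `S (m - r)`, and for odd `q` only the terms `l = 1` and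
`l = q - 1` of `S q` survive, so `S q = -(q + 1)(q + 2)/4 · B_{q-1}`. This collapses the double
sum to a combination of `∑ C(m,r) B_r B_{m-1-r}` and `∑ C(m+1,r) B_r B_{m-1-r}`. The unweighted
convolution `∑ B_r B_{m-1-r}` on the right is then traded for the second of these by
Matiyasevich's identity
`(n + 2) ∑ B_l B_{n-l} = 2 ∑ C(n+2,l) B_l B_{n-l} + (n + 2)(n + 1)n/6 · B_{n-1}`
at `n = m - 1`, where `B_{m-2} = 0` once `m ≥ 5` (`m = 1` is checked directly).

Matiyasevich's identity is the coefficient of `tⁿ` in (with `β(t) = t/(eᵗ - 1)`)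
`β(xt) β((1-x)t) = (1-x) β(t) β(xt) + x β(t) β((1-x)t) + x(1-x) t β(t)`,
integrated over `x ∈ [0, 1]` with `∫₀¹ xᵏ(1-x)ˡ dx = k! l!/(k+l+1)!`. -/

open scoped Nat

namespace Polynomial

/-- `∫₀¹ p(x) dx`. -/
noncomputable def unitIntegral : ℚ[X] →ₗ[ℚ] ℚ :=
  lsum fun k => ((k + 1 : ℚ)⁻¹) • LinearMap.id

theorem unitIntegral_monomial (k : ℕ) (c : ℚ) : unitIntegral (monomial k c) = c / (k + 1) := by
  simp [unitIntegral, div_eq_mul_inv, mul_comm]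

theorem unitIntegral_C_mul (c : ℚ) (p : ℚ[X]) :
    unitIntegral (C c * p) = c * unitIntegral p := by
  rw [C_mul', map_smul, smul_eq_mul]

theorem unitIntegral_X_pow_mul_one_sub_X_pow (k l : ℕ) :
    unitIntegral (X ^ k * (1 - X) ^ l) = (k ! * l ! : ℚ) / (k + l + 1)! := by
  induction l generalizing k with
  | zero =>
    rw [pow_zero, mul_one, X_pow_eq_monomial, unitIntegral_monomial, Nat.factorial_succ,
      Nat.factorial_zero]
    push_cast
    field_simp
  | succ l ih =>
    have hsplit : (X : ℚ[X]) ^ k * (1 - X) ^ (l + 1) =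
        X ^ k * (1 - X) ^ l - X ^ (k + 1) * (1 - X) ^ l := by
      ring
    rw [hsplit, map_sub, ih, ih, show k + 1 + l + 1 = k + (l + 1) + 1 by omega,
      Nat.factorial_succ (k + (l + 1)), show k + (l + 1) = k + l + 1 by omega,
      Nat.factorial_succ k, Nat.factorial_succ l]
    push_cast
    field_simp
    ring

end Polynomial

namespace PowerSeries

variable {A : Type*} [CommRing A] [Algebra ℚ A]

theorem rescale_bernoulliPowerSeries_mul_rescale_exp_sub_one (a : A) :
    rescale a (bernoulliPowerSeries A) * (rescale a (exp A) - 1) = C a * X := by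
  simpa only [map_mul, map_sub, map_one, rescale_X] using
    congrArg (rescale a) (bernoulliPowerSeries_mul_exp_sub_one A)

theorem exp_sub_one_ne_zero [Nontrivial A] : exp A - 1 ≠ 0 := by
  intro h
  simpa using congrArg (coeff 1) h

/-- After clearing denominators this is
`1/((u - 1)(v - 1)) = (1 + 1/(u - 1) + 1/(v - 1))/(uv - 1)` for `u = e^{at}`, `v = e^{bt}`,
`uv = eᵗ`. -/
theorem rescale_bernoulliPowerSeries_mul_rescale_bernoulliPowerSeries [IsDomain A] (a b : A)
    (hab : a + b = 1) :
    rescale a (bernoulliPowerSeries A) * rescale b (bernoulliPowerSeries A) =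
      C b * (bernoulliPowerSeries A * rescale a (bernoulliPowerSeries A)) +
        C a * (bernoulliPowerSeries A * rescale b (bernoulliPowerSeries A)) +
        C (a * b) * (bernoulliPowerSeries A * X) := by
  refine mul_right_cancel₀ (exp_sub_one_ne_zero (A := A)) ?_
  have hexp : rescale a (exp A) * rescale b (exp A) = exp A := by
    rw [exp_mul_exp_eq_exp_add, hab, rescale_one, RingHom.id_apply]
  linear_combination (rescale b (bernoulliPowerSeries A) * rescale b (exp A)) *
      rescale_bernoulliPowerSeries_mul_rescale_exp_sub_one a +
    (C a * X + rescale a (bernoulliPowerSeries A)) *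
      rescale_bernoulliPowerSeries_mul_rescale_exp_sub_one b -
    rescale a (bernoulliPowerSeries A) * rescale b (bernoulliPowerSeries A) * hexp -
    (C b * rescale a (bernoulliPowerSeries A) + C a * rescale b (bernoulliPowerSeries A) +
      C (a * b) * X) * bernoulliPowerSeries_mul_exp_sub_one A -
    X ^ 2 * (map_mul C a b)

theorem coeff_rescale_bernoulliPowerSeries (a : A) (n : ℕ) :
    coeff n (rescale a (bernoulliPowerSeries A)) =
      a ^ n * algebraMap ℚ A (bernoulli n / n !) := by
  rw [coeff_rescale, bernoulliPowerSeries, coeff_mk]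

theorem coeff_bernoulliPowerSeries (n : ℕ) :
    coeff n (bernoulliPowerSeries A) = algebraMap ℚ A (bernoulli n / n !) :=
  coeff_mk _ _

end PowerSeries

section Matiyasevich

open PowerSeries
open scoped Polynomial
open Polynomial (unitIntegral unitIntegral_C_mul unitIntegral_X_pow_mul_one_sub_X_pow)

local notation "𝔅" => bernoulliPowerSeries ℚ[X]

theorem unitIntegral_coeff_rescale_mul_rescale (n : ℕ) :
    unitIntegral (coeff n (rescale Polynomial.X 𝔅 * rescale (1 - Polynomial.X) 𝔅)) =
      (∑ l ∈ range (n + 1), bernoulli l * bernoulli (n - l)) / (n + 1)! := by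
  rw [coeff_mul, Nat.sum_antidiagonal_eq_sum_range_succ_mk, map_sum, sum_div]
  refine sum_congr rfl fun l hl => ?_
  have hln : l ≤ n := Nat.lt_succ_iff.mp (mem_range.mp hl)
  simp only [coeff_rescale_bernoulliPowerSeries, Polynomial.algebraMap_eq]
  rw [show Polynomial.X ^ l * Polynomial.C (bernoulli l / l !) *
        ((1 - Polynomial.X) ^ (n - l) * Polynomial.C (bernoulli (n - l) / (n - l)!)) =
      Polynomial.C (bernoulli l / l ! * (bernoulli (n - l) / (n - l)!)) *
        (Polynomial.X ^ l * (1 - Polynomial.X) ^ (n - l)) by rw [Polynomial.C_mul]; ring,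
    unitIntegral_C_mul, unitIntegral_X_pow_mul_one_sub_X_pow, Nat.add_sub_cancel' hln]
  field_simp

theorem unitIntegral_mul_coeff_mul_rescale (p q : ℚ[X])
    (hpq : ∀ j, unitIntegral (q * p ^ j) = (j ! : ℚ) / (j + 2)!) (n : ℕ) :
    unitIntegral (q * coeff n (𝔅 * rescale p 𝔅)) =
      (∑ l ∈ range (n + 1), ((n + 2).choose l : ℚ) * bernoulli l * bernoulli (n - l)) /
        (n + 2)! := by
  rw [coeff_mul, Nat.sum_antidiagonal_eq_sum_range_succ_mk, mul_sum, map_sum, sum_div]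
  refine sum_congr rfl fun l hl => ?_
  have hln : l ≤ n := Nat.lt_succ_iff.mp (mem_range.mp hl)
  simp only [coeff_bernoulliPowerSeries, coeff_rescale_bernoulliPowerSeries,
    Polynomial.algebraMap_eq]
  rw [show q * (Polynomial.C (bernoulli l / l !) *
        (p ^ (n - l) * Polynomial.C (bernoulli (n - l) / (n - l)!))) =
      Polynomial.C (bernoulli l / l ! * (bernoulli (n - l) / (n - l)!)) * (q * p ^ (n - l)) by
        rw [Polynomial.C_mul]; ring,
    unitIntegral_C_mul, hpq]
  have hchoose : ((n + 2).choose l : ℚ) * l ! * (n - l + 2)! = (n + 2)! := by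
    rw [show n - l + 2 = n + 2 - l by omega]
    exact_mod_cast Nat.choose_mul_factorial_mul_factorial (by omega)
  have hchoose_ne : ((n + 2).choose l : ℚ) ≠ 0 := by
    exact_mod_cast (Nat.choose_pos (by omega)).ne'
  rw [← hchoose]
  field_simp

theorem unitIntegral_mul_coeff_mul_X (n : ℕ) :
    unitIntegral (Polynomial.X * (1 - Polynomial.X) * coeff n (𝔅 * X)) =
      n * bernoulli (n - 1) / (6 * n !) := by
  cases n with
  | zero => simp
  | succ k =>
    rw [coeff_succ_mul_X, coeff_bernoulliPowerSeries, Polynomial.algebraMap_eq,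
      show Polynomial.X * (1 - Polynomial.X) * Polynomial.C (bernoulli k / k !) =
        Polynomial.C (bernoulli k / k !) * (Polynomial.X ^ 1 * (1 - Polynomial.X) ^ 1) by ring,
      unitIntegral_C_mul, unitIntegral_X_pow_mul_one_sub_X_pow, Nat.factorial_succ k,
      Nat.add_sub_cancel]
    push_cast
    field_simp
    norm_num [Nat.factorial]

theorem sum_bernoulli_mul_bernoulli (n : ℕ) :
    ((n : ℚ) + 2) * ∑ l ∈ range (n + 1), bernoulli l * bernoulli (n - l) =
      2 * ∑ l ∈ range (n + 1), ((n + 2).choose l : ℚ) * bernoulli l * bernoulli (n - l) +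
        ((n : ℚ) + 2) * (n + 1) * n / 6 * bernoulli (n - 1) := by
  have h := congrArg (fun f => unitIntegral (coeff n f))
    (rescale_bernoulliPowerSeries_mul_rescale_bernoulliPowerSeries Polynomial.X
      (1 - Polynomial.X) (add_sub_cancel _ _))
  simp only [map_add, coeff_C_mul] at h
  have hX : ∀ j, unitIntegral ((1 - Polynomial.X) * Polynomial.X ^ j) =
      (j ! : ℚ) / (j + 2)! := by
    intro j
    have := unitIntegral_X_pow_mul_one_sub_X_pow j 1
    rw [pow_one, mul_comm] at this
    simpa using this
  have hX' : ∀ j, unitIntegral (Polynomial.X * (1 - Polynomial.X) ^ j) =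
      (j ! : ℚ) / (j + 2)! := by
    intro j
    have := unitIntegral_X_pow_mul_one_sub_X_pow 1 j
    rw [pow_one, add_comm 1 j] at this
    simpa using this
  rw [unitIntegral_coeff_rescale_mul_rescale, unitIntegral_mul_coeff_mul_X,
    unitIntegral_mul_coeff_mul_rescale _ _ hX, unitIntegral_mul_coeff_mul_rescale _ _ hX',
    Nat.factorial_succ (n + 1), Nat.factorial_succ n] at h
  push_cast at h
  field_simp at h
  linear_combination h / 6

end Matiyasevich

theorem bernoulli_mul_bernoulli_sub_eq_zero {n r : ℕ} (hn : Odd n) (hr : r ≤ n) (hr1 : r ≠ 1)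
    (hnr1 : n - r ≠ 1) : bernoulli r * bernoulli (n - r) = 0 := by
  rcases Nat.even_or_odd r with hr_even | hr_odd
  · have hnr : Odd (n - r) := (Nat.odd_sub hr).mpr (iff_of_true hn hr_even)
    rw [bernoulli_eq_zero_of_odd hnr (by obtain ⟨t, ht⟩ := hnr; omega), mul_zero]
  · rw [bernoulli_eq_zero_of_odd hr_odd (by obtain ⟨t, ht⟩ := hr_odd; omega), zero_mul]

theorem S_of_odd {q : ℕ} (hq : Odd q) :
    S q = -(((q : ℚ) + 1) * (q + 2) / 4) * bernoulli (q - 1) := by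
  have hq1 : 1 ≤ q := hq.pos
  rw [S, sum_eq_add_of_mem 1 (q - 1) (mem_range.mpr (by omega)) (mem_range.mpr (by omega))
      (by obtain ⟨t, ht⟩ := hq; omega) fun r hr ⟨hr1, hrq⟩ => by
        rw [mul_assoc, bernoulli_mul_bernoulli_sub_eq_zero hq (by simp at hr; omega) hr1
          (by omega), mul_zero],
    Nat.sub_sub_self hq1, Nat.choose_one_right, bernoulli_one,
    show q - 1 = q + 1 - 2 by omega, Nat.choose_symm (by omega), Nat.cast_choose_two]
  push_cast
  ring

theorem cast_choose_succ_mul_sub (n r : ℕ) (hr : r ≤ n + 1) :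
    ((n + 1).choose r : ℚ) * ((n : ℚ) + 1 - r) = ((n : ℚ) + 1) * n.choose r := by
  have h := congrArg (Nat.cast : ℕ → ℚ) (Nat.choose_mul_succ_eq n r)
  push_cast [Nat.cast_sub hr] at h
  linarith

theorem choose_div_mul_bernoulli_mul_S_sub {m r : ℕ} (hm : Odd m) (hr : r ≤ m) (hr1 : r ≠ 1) :
    ((m + 1).choose r : ℚ) / ((m : ℚ) + 1 - r) * bernoulli r * S (m - r) =
      -(((m : ℚ) + 1) * ((m.choose r : ℚ) * bernoulli r * bernoulli (m - 1 - r)) +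
        ((m + 1).choose r : ℚ) * bernoulli r * bernoulli (m - 1 - r)) / 4 := by
  rcases Nat.even_or_odd r with hr_even | hr_odd
  · have hmr : Odd (m - r) := (Nat.odd_sub hr).mpr (iff_of_true hm hr_even)
    have hpos : (m : ℚ) + 1 - r ≠ 0 := by
      have : (r : ℚ) ≤ m := by exact_mod_cast hr
      linarith
    have hcancel : ((m + 1).choose r : ℚ) / ((m : ℚ) + 1 - r) * ((m : ℚ) + 1 - r) =
        (m + 1).choose r := div_mul_cancel₀ _ hpos
    rw [S_of_odd hmr, Nat.cast_sub hr, show m - r - 1 = m - 1 - r by omega]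
    linear_combination -(((m : ℚ) - r + 2) / 4 * bernoulli r * bernoulli (m - 1 - r)) * hcancel -
      bernoulli r * bernoulli (m - 1 - r) / 4 * cast_choose_succ_mul_sub m r (by omega)
  · rw [bernoulli_eq_zero_of_odd hr_odd (by obtain ⟨t, ht⟩ := hr_odd; omega)]
    ring

theorem bernoulli_sub_one_sub_one_eq_zero {m : ℕ} (hm : Odd m) (hm5 : 5 ≤ m) :
    bernoulli (m - 1 - 1) = 0 :=
  bernoulli_eq_zero_of_odd (by obtain ⟨t, ht⟩ := hm; exact ⟨t - 1, by omega⟩) (by omega)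

theorem sum_choose_div_mul_bernoulli_mul_S_sub {m : ℕ} (hm : Odd m) (hm5 : 5 ≤ m) :
    ∑ r ∈ range (m + 1),
        ((m + 1).choose r : ℚ) / ((m : ℚ) + 1 - r) * bernoulli r * S (m - r) =
      -(((m : ℚ) + 2) * (m + 1) / (4 * m)) *
          ∑ r ∈ range m, (m.choose r : ℚ) * bernoulli r * bernoulli (m - 1 - r) -
        (∑ r ∈ range m, ((m + 1).choose r : ℚ) * bernoulli r * bernoulli (m - 1 - r)) /
          4 := by
  have h1 : 1 ∈ range (m + 1) := mem_range.mpr (by omega)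
  rw [← add_sum_erase _ _ h1, sum_congr rfl fun r hr => choose_div_mul_bernoulli_mul_S_sub hm
      (Nat.lt_succ_iff.mp (mem_range.mp (mem_of_mem_erase hr))) (ne_of_mem_erase hr),
    sum_erase _ (by simp [bernoulli_sub_one_sub_one_eq_zero hm hm5]), sum_range_succ,
    bernoulli_eq_zero_of_odd hm (by omega)]
  simp only [mul_zero, zero_mul, add_zero, neg_zero, zero_div]
  rw [← sum_div, sum_neg_distrib, sum_add_distrib, ← mul_sum,
    Nat.choose_one_right, bernoulli_one, S, Nat.sub_add_cancel (by omega : 1 ≤ m)]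
  have hm0 : (m : ℚ) ≠ 0 := by exact_mod_cast (by omega : m ≠ 0)
  push_cast
  rw [add_sub_cancel_right]
  field_simp
  ring

theorem two_mul_sum_choose_mul_bernoulli_mul_bernoulli {m : ℕ} (hm : Odd m) (hm5 : 5 ≤ m) :
    2 * ∑ r ∈ range m, ((m + 1).choose r : ℚ) * bernoulli r * bernoulli (m - 1 - r) =
      ((m : ℚ) + 1) * ∑ r ∈ range m, bernoulli r * bernoulli (m - 1 - r) := by
  have h := sum_bernoulli_mul_bernoulli (m - 1)
  rw [Nat.sub_add_cancel (by omega : 1 ≤ m), show m - 1 + 2 = m + 1 by omega,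
    Nat.cast_sub (by omega : 1 ≤ m), bernoulli_sub_one_sub_one_eq_zero hm hm5, mul_zero,
    add_zero] at h
  linear_combination -h

theorem stmt5_general (m : ℕ) (hodd : Odd m) (hm3 : m ≠ 3) :
    2 / ((m : ℚ) + 1) *
        ∑ r ∈ Finset.range (m + 1), ∑ l ∈ Finset.range (m - r + 1),
          (((m + 1).choose r : ℚ) * ((m + 1 - r).choose l : ℚ) / ((m : ℚ) + 1 - r)) *
            bernoulli r * bernoulli l * bernoulli (m - r - l)
      + 1 / ((m : ℚ) + 1) *
        ∑ r ∈ Finset.range m, ((m + 1).choose r : ℚ) * bernoulli r * bernoulli (m - 1 - r)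
    = -(((m : ℚ) + 2) / (2 * m)) *
        ∑ r ∈ Finset.range m, (m.choose r : ℚ) * bernoulli r * bernoulli (m - 1 - r)
      + 1 / 4 * ∑ r ∈ Finset.range m, bernoulli r * bernoulli (m - 1 - r) := by
  rcases eq_or_ne m 1 with rfl | hm1
  · norm_num [sum_range_succ, bernoulli_one]
  have hm5 : 5 ≤ m := by obtain ⟨t, rfl⟩ := hodd; omega
  have hinner : ∀ r ∈ range (m + 1), ∑ l ∈ range (m - r + 1),
      (((m + 1).choose r : ℚ) * ((m + 1 - r).choose l : ℚ) / ((m : ℚ) + 1 - r)) *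
        bernoulli r * bernoulli l * bernoulli (m - r - l) =
      ((m + 1).choose r : ℚ) / ((m : ℚ) + 1 - r) * bernoulli r * S (m - r) := by
    intro r hr
    have hrm : r ≤ m := Nat.lt_succ_iff.mp (mem_range.mp hr)
    rw [S, mul_sum, show m + 1 - r = m - r + 1 by omega]
    exact sum_congr rfl fun l _ => by ring
  rw [sum_congr rfl hinner, sum_choose_div_mul_bernoulli_mul_S_sub hodd hm5]
  have hm0 : (m : ℚ) ≠ 0 := by exact_mod_cast (by omega : m ≠ 0)
  field_simp
  linear_combination (2 * (m : ℚ)) * two_mul_sum_choose_mul_bernoulli_mul_bernoulli hodd hm5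

theorem stmt5 (m : ℕ) (hm : 0 < m) (hodd : Odd m) (hm3 : m ≠ 3) :
    2 / ((m : ℚ) + 1) *
        ∑ r ∈ Finset.range (m + 1), ∑ l ∈ Finset.range (m - r + 1),
          (((m + 1).choose r : ℚ) * ((m + 1 - r).choose l : ℚ) / ((m : ℚ) + 1 - r)) *
            bernoulli r * bernoulli l * bernoulli (m - r - l)
      + 1 / ((m : ℚ) + 1) *
        ∑ r ∈ Finset.range m, ((m + 1).choose r : ℚ) * bernoulli r * bernoulli (m - 1 - r)
    = -(((m : ℚ) + 2) / (2 * m)) *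
        ∑ r ∈ Finset.range m, (m.choose r : ℚ) * bernoulli r * bernoulli (m - 1 - r)
      + 1 / 4 * ∑ r ∈ Finset.range m, bernoulli r * bernoulli (m - 1 - r) :=
  stmt5_general m hodd hm3
end

section
/- Let p be a prime and 0 < m < p−1 an even integer. Then ∑_{k=1}^{p-1} H_k²/k^m ≡ −∑_{j=0}^{p-1-m} B_j B_{p-1-m-j} − ∑_{j=p-m}^{p-2} B_j B_{2p-2-m-j} (mod p), as rationals with denominators coprime to p. -/
/-!
Modulo `p`, Fermat gives `1/j ≡ j^(p-2)`, so Faulhaber's formula for `∑_{j ≤ k} j^(p-2)`, together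
with `C(p-1, i) ≡ (-1)^i` and `B'_i = (-1)^i B_i`, turns `H_k` into the polynomial
`-∑_{i < p-1} B_i k^(p-1-i)` in `k`; likewise `1/k^m ≡ k^(p-1-m)`. Squaring and summing over `k`,
only the power sums `∑_k k^e` with `(p-1) ∣ e` survive, each equal to `-1`, and these are exactly
the pairs of indices `i + i' ≡ p-1-m (mod p-1)`, which give the two sums of products of Bernoulli
numbers. Von Staudt–Clausen makes every `B_i` with `i < p-1` a `p`-integral rational.
-/

open Finset

lemma sum_range_sum_range_ite_add_eq {M : Type*} [AddCommMonoid M] (N s : ℕ) (f : ℕ → ℕ → M) :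
    ∑ i ∈ range N, ∑ j ∈ range N, (if i + j = s then f i j else 0) =
      ∑ i ∈ range N with i ≤ s ∧ s < N + i, f i (s - i) := by
  rw [sum_filter]
  refine sum_congr rfl fun i _ => ?_
  split_ifs with h
  · rw [sum_eq_single_of_mem (s - i) (mem_range.2 (by omega)) fun j _ hj => if_neg (by omega),
      if_pos (by omega)]
  · exact sum_eq_zero fun j hj => if_neg (by grind)

lemma dvd_sub_add_sub_add_iff {N i j n : ℕ} (hi : i < N) (hj : j < N) (hn : n < N) :
    N ∣ N - i + (N - j) + n ↔ i + j = n ∨ i + j = n + N := by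
  constructor
  · rintro ⟨c, hc⟩
    have : c < 3 := Nat.lt_of_mul_lt_mul_left (a := N) (by omega)
    interval_cases c <;> omega
  · rintro (h | h)
    exacts [⟨2, by omega⟩, ⟨1, by omega⟩]

namespace HarmonicBernoulli

def pIntegers (p : ℕ) [Fact p.Prime] : Subring ℚ := (Rat.padicValuation p).integer

variable {p : ℕ} [hp : Fact p.Prime]

lemma mem_pIntegers {q : ℚ} : q ∈ pIntegers p ↔ ¬ p ∣ q.den :=
  Rat.padicValuation_le_one_iff

lemma inv_natCast_mem_pIntegers {n : ℕ} (hn : ¬ p ∣ n) : (n : ℚ)⁻¹ ∈ pIntegers p := by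
  rw [mem_pIntegers, Rat.inv_natCast_den]
  split_ifs
  · exact hp.out.not_dvd_one
  · exact hn

lemma bernoulli_mem_pIntegers {t : ℕ} (ht : t < p - 1) : bernoulli t ∈ pIntegers p := by
  rcases Nat.even_or_odd t with ⟨k, rfl⟩ | hodd
  · rcases Nat.eq_zero_or_pos k with rfl | hk
    · simp
    obtain ⟨z, hz⟩ := Bernoulli.vonStaudt_clausen k
    rw [← two_mul, eq_sub_of_add_eq hz.symm]
    refine sub_mem (intCast_mem _ z) (sum_mem fun ℓ hℓ => ?_)
    simp only [mem_filter, mem_range] at hℓ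
    obtain ⟨-, hℓ, hdvd⟩ := hℓ
    have hℓp : ℓ ≠ p := by
      rintro rfl
      exact absurd (Nat.le_of_dvd (by omega) hdvd) (by omega)
    simpa using inv_natCast_mem_pIntegers ((Nat.prime_dvd_prime_iff_eq hp.out hℓ).not.2 hℓp.symm)
  · obtain rfl | h1 := eq_or_ne t 1
    · rw [bernoulli_one, neg_div, one_div]
      refine neg_mem (inv_natCast_mem_pIntegers (n := 2) fun h => ?_)
      exact absurd (Nat.le_of_dvd two_pos h) (by omega)
    · rw [bernoulli_eq_zero_of_odd hodd (by have := hodd.pos; omega)]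
      exact zero_mem _

variable (p) in
def ReducesTo (q : ℚ) (x : ZMod p) : Prop := q ∈ pIntegers p ∧ (q : ZMod p) = x

namespace ReducesTo

variable {q r : ℚ} {x y : ZMod p}

lemma natCast_den_ne_zero (h : ReducesTo p q x) : (q.den : ZMod p) ≠ 0 := by
  rw [Ne, ZMod.natCast_eq_zero_iff]
  exact mem_pIntegers.1 h.1

lemma one : ReducesTo p 1 1 := ⟨one_mem _, Rat.cast_one⟩

lemma natCast (n : ℕ) : ReducesTo p n n := ⟨natCast_mem _ n, Rat.cast_natCast n⟩

lemma inv_natCast {n : ℕ} (hn : ¬ p ∣ n) : ReducesTo p (n : ℚ)⁻¹ (n : ZMod p)⁻¹ := by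
  refine ⟨inv_natCast_mem_pIntegers hn, Rat.cast_inv_of_ne_zero ?_ |>.trans (by simp)⟩
  simpa [ZMod.natCast_eq_zero_iff] using hn

lemma add (hq : ReducesTo p q x) (hr : ReducesTo p r y) : ReducesTo p (q + r) (x + y) :=
  ⟨add_mem hq.1 hr.1, by
    rw [Rat.cast_add_of_ne_zero hq.natCast_den_ne_zero hr.natCast_den_ne_zero, hq.2, hr.2]⟩

lemma mul (hq : ReducesTo p q x) (hr : ReducesTo p r y) : ReducesTo p (q * r) (x * y) :=
  ⟨mul_mem hq.1 hr.1, by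
    rw [Rat.cast_mul_of_ne_zero hq.natCast_den_ne_zero hr.natCast_den_ne_zero, hq.2, hr.2]⟩

lemma neg (hq : ReducesTo p q x) : ReducesTo p (-q) (-x) :=
  ⟨neg_mem hq.1, by rw [Rat.cast_neg, hq.2]⟩

lemma sub (hq : ReducesTo p q x) (hr : ReducesTo p r y) : ReducesTo p (q - r) (x - y) := by
  simpa only [sub_eq_add_neg] using hq.add hr.neg

lemma pow (hq : ReducesTo p q x) (n : ℕ) : ReducesTo p (q ^ n) (x ^ n) := by
  induction n with
  | zero => simpa using one
  | succ n ih => simpa only [pow_succ] using ih.mul hq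

lemma div_natCast (hq : ReducesTo p q x) {n : ℕ} (hn : ¬ p ∣ n) : ReducesTo p (q / n) (x / n) := by
  simpa only [div_eq_mul_inv] using hq.mul (inv_natCast hn)

lemma sum {ι : Type*} {s : Finset ι} {f : ι → ℚ} {g : ι → ZMod p}
    (h : ∀ i ∈ s, ReducesTo p (f i) (g i)) : ReducesTo p (∑ i ∈ s, f i) (∑ i ∈ s, g i) := by
  classical
  induction s using Finset.induction_on with
  | empty => simpa using natCast (p := p) 0
  | insert a s ha ih =>
    rw [sum_insert ha, sum_insert ha]
    exact (h a (mem_insert_self a s)).add (ih fun i hi => h i (mem_insert_of_mem hi))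

lemma unique (hx : ReducesTo p q x) (hy : ReducesTo p q y) : x = y := hx.2.symm.trans hy.2

lemma intCast_dvd_num (h : ReducesTo p q 0) : (p : ℤ) ∣ q.num := by
  have h0 := h.2
  rw [Rat.cast_def, div_eq_zero_iff] at h0
  rw [← ZMod.intCast_zmod_eq_zero_iff_dvd]
  exact h0.resolve_right h.natCast_den_ne_zero

end ReducesTo

lemma reducesTo_bernoulli {t : ℕ} (ht : t < p - 1) : ReducesTo p (bernoulli t) (bernoulli t) :=
  ⟨bernoulli_mem_pIntegers ht, rfl⟩

lemma cast_choose_sub_one {i : ℕ} (hi : i < p) : ((p - 1).choose i : ZMod p) = (-1) ^ i := by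
  induction i with
  | zero => simp
  | succ i ih =>
    have hpascal : (p - 1).choose i + (p - 1).choose (i + 1) = p.choose (i + 1) := by
      conv_rhs => rw [← Nat.sub_add_cancel hp.out.one_le]
      exact (Nat.choose_succ_succ _ _).symm
    have hzero := (ZMod.natCast_eq_zero_iff _ _).2 (hp.out.dvd_choose_self i.succ_ne_zero hi)
    rw [← hpascal, Nat.cast_add, ih (by omega)] at hzero
    rw [pow_succ]
    linear_combination hzero

lemma sum_Icc_pow (t : ℕ) :
    ∑ k ∈ Icc 1 (p - 1), (k : ZMod p) ^ t = if p - 1 ∣ t then -1 else 0 := by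
  have hunits : ∑ k ∈ Icc 1 (p - 1), (k : ZMod p) ^ t = ∑ u : (ZMod p)ˣ, (u : ZMod p) ^ t := by
    refine sum_bij' (fun k hk => Units.mk0 (k : ZMod p) ?_) (fun u _ => (u : ZMod p).val)
      (fun _ _ => mem_univ _) (fun u _ => ?_) (fun k hk => ?_) (fun u _ => ?_) (fun _ _ => rfl)
    · rw [Ne, ZMod.natCast_eq_zero_iff]
      exact Nat.not_dvd_of_pos_of_lt (by grind) (by grind)
    · have := ZMod.val_lt (u : ZMod p)
      have := (ZMod.val_ne_zero (u : ZMod p)).2 u.ne_zero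
      grind
    · simp [ZMod.val_cast_of_lt (show k < p by grind)]
    · ext; simp
  rw [hunits, FiniteField.sum_pow_units, ZMod.card]

lemma inv_eq_pow_sub_two {x : ZMod p} (hx : x ≠ 0) : x⁻¹ = x ^ (p - 2) := by
  refine (eq_inv_of_mul_eq_one_left ?_).symm
  have := hp.out.two_le
  rw [← pow_succ, show p - 2 + 1 = p - 1 by omega, ZMod.pow_card_sub_one_eq_one hx]

lemma sum_Icc_pow_sub_two (k : ℕ) :
    ∑ j ∈ Icc 1 k, (j : ZMod p) ^ (p - 2) =
      -∑ i ∈ range (p - 1), (bernoulli i : ZMod p) * (k : ZMod p) ^ (p - 1 - i) := by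
  obtain ⟨t, rfl⟩ : ∃ t, p = t + 2 := ⟨p - 2, by have := hp.out.two_le; omega⟩
  have hdvd : ¬ t + 2 ∣ t + 1 := Nat.not_dvd_of_pos_of_lt (by omega) (by omega)
  have hcast : ((t + 1 : ℕ) : ZMod (t + 2)) = -1 := by
    rw [eq_neg_iff_add_eq_zero, ← Nat.cast_succ, ZMod.natCast_self]
  simp only [Nat.add_sub_cancel, show t + 2 - 1 = t + 1 by omega]
  refine ReducesTo.unique (q := ∑ j ∈ Ico 1 (k + 1), (j : ℚ) ^ t)
    (ReducesTo.sum fun j _ => (ReducesTo.natCast j).pow t) ?_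
  rw [sum_Ico_pow, ← sum_neg_distrib]
  refine ReducesTo.sum fun i hi => ?_
  have hi : i < t + 1 := mem_range.1 hi
  have hB : ReducesTo (t + 2) (bernoulli' i) ((-1) ^ i * bernoulli i) := by
    rw [bernoulli'_eq_bernoulli]
    simpa using (ReducesTo.one.neg.pow i).mul
      (reducesTo_bernoulli (p := t + 2) (by omega))
  have h := ((hB.mul (.natCast ((t + 1).choose i))).mul
    ((ReducesTo.natCast k).pow (t + 1 - i))).div_natCast hdvd
  convert h using 1
  · push_cast; rfl
  · have hC : ((t + 1).choose i : ZMod (t + 2)) = (-1) ^ i :=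
      cast_choose_sub_one (p := t + 2) (by omega)
    have hsq : ((-1) ^ i * (-1) ^ i : ZMod (t + 2)) = 1 := by rw [← mul_pow]; simp
    rw [hcast, hC, div_neg, div_one]
    linear_combination (bernoulli i * (k : ZMod (t + 2)) ^ (t + 1 - i)) * hsq

lemma reducesTo_H {k : ℕ} (hk : k < p) :
    ReducesTo p (H k)
      (-∑ i ∈ range (p - 1), (bernoulli i : ZMod p) * (k : ZMod p) ^ (p - 1 - i)) := by
  rw [← sum_Icc_pow_sub_two]
  refine ReducesTo.sum fun j hj => ?_
  have hj : ¬ p ∣ j := Nat.not_dvd_of_pos_of_lt (by grind) (by grind)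
  rw [← inv_eq_pow_sub_two (by rwa [Ne, ZMod.natCast_eq_zero_iff]), ← one_div]
  simpa using ReducesTo.one.div_natCast hj

lemma sum_sq_div_pow (b : ℕ → ZMod p) {m : ℕ} (hm : 0 < m) (hmp : m < p - 1) :
    ∑ k ∈ Icc 1 (p - 1), (-∑ i ∈ range (p - 1), b i * (k : ZMod p) ^ (p - 1 - i)) ^ 2
        / (k : ZMod p) ^ m =
      -∑ j ∈ range (p - m), b j * b (p - 1 - m - j)
        - ∑ j ∈ Icc (p - m) (p - 2), b j * b (2 * p - 2 - m - j) := by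
  set N := p - 1
  set n := p - 1 - m
  calc _ = ∑ k ∈ Icc 1 N, ∑ i ∈ range N, ∑ j ∈ range N,
        b i * b j * (k : ZMod p) ^ (N - i + (N - j) + n) := by
        refine sum_congr rfl fun k hk => ?_
        have hk0 : (k : ZMod p) ≠ 0 := by
          rw [Ne, ZMod.natCast_eq_zero_iff]
          exact Nat.not_dvd_of_pos_of_lt (by grind) (by grind)
        have hinv : 1 / (k : ZMod p) ^ m = (k : ZMod p) ^ n := by
          rw [eq_comm, eq_div_iff (pow_ne_zero _ hk0), ← pow_add,
            show n + m = N by omega, ZMod.pow_card_sub_one_eq_one hk0]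
        rw [div_eq_mul_one_div, hinv, neg_sq, sq, sum_mul_sum, sum_mul]
        refine sum_congr rfl fun i _ => ?_
        rw [sum_mul]
        refine sum_congr rfl fun j _ => ?_
        ring
    _ = ∑ i ∈ range N, ∑ j ∈ range N,
          b i * b j * ∑ k ∈ Icc 1 N, (k : ZMod p) ^ (N - i + (N - j) + n) := by
        rw [sum_comm]
        refine sum_congr rfl fun i _ => ?_
        rw [sum_comm]
        simp only [mul_sum]
    _ = ∑ i ∈ range N, ∑ j ∈ range N,
          ((if i + j = n then -(b i * b j) else 0)
            + (if i + j = n + N then -(b i * b j) else 0)) := by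
        refine sum_congr rfl fun i hi => sum_congr rfl fun j hj => ?_
        have key := dvd_sub_add_sub_add_iff (mem_range.1 hi) (mem_range.1 hj) (show n < N by omega)
        rw [sum_Icc_pow]
        split_ifs <;> grind
    _ = _ := by
        simp only [sum_add_distrib, sum_range_sum_range_ite_add_eq, sum_neg_distrib]
        have h1 : {i ∈ range N | i ≤ n ∧ n < N + i} = range (p - m) := by
          ext i; simp only [mem_filter, mem_range]; omega
        have h2 : {i ∈ range N | i ≤ n + N ∧ n + N < N + i} = Icc (p - m) (p - 2) := by
          ext i; simp only [mem_filter, mem_range, mem_Icc]; omega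
        rw [h1, h2, sub_eq_add_neg]
        congr 2
        refine sum_congr rfl fun j hj => ?_
        rw [show n + N - j = 2 * p - 2 - m - j by omega]

end HarmonicBernoulli

open HarmonicBernoulli in
theorem stmt7_general (p m : ℕ) (hp : p.Prime) (hm : 0 < m) (hmp : m < p - 1) :
    (p : ℤ) ∣ ((∑ k ∈ Finset.Icc 1 (p - 1), H k ^ 2 / (k : ℚ) ^ m)
      - (- ∑ j ∈ Finset.range (p - m), bernoulli j * bernoulli (p - 1 - m - j)
         - ∑ j ∈ Finset.Icc (p - m) (p - 2), bernoulli j * bernoulli (2 * p - 2 - m - j))).num := by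
  have : Fact p.Prime := ⟨hp⟩
  have hL : ReducesTo p (∑ k ∈ Icc 1 (p - 1), H k ^ 2 / (k : ℚ) ^ m)
      (∑ k ∈ Icc 1 (p - 1),
        (-∑ i ∈ range (p - 1), (bernoulli i : ZMod p) * (k : ZMod p) ^ (p - 1 - i)) ^ 2
          / (k : ZMod p) ^ m) := by
    refine ReducesTo.sum fun k hk => ?_
    have hk : 0 < k ∧ k < p := by grind
    have hpk : ¬ p ∣ k ^ m := fun h => Nat.not_dvd_of_pos_of_lt hk.1 hk.2 (hp.dvd_of_dvd_pow h)
    simpa using ((reducesTo_H hk.2).pow 2).div_natCast hpk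
  have hR := (ReducesTo.sum fun j (hj : j ∈ range (p - m)) =>
      (reducesTo_bernoulli (p := p) (t := j) (by grind)).mul
        (reducesTo_bernoulli (t := p - 1 - m - j) (by omega))).neg.sub
    (ReducesTo.sum fun j (hj : j ∈ Icc (p - m) (p - 2)) =>
      (reducesTo_bernoulli (p := p) (t := j) (by grind)).mul
        (reducesTo_bernoulli (t := 2 * p - 2 - m - j) (by grind)))
  have h0 := hL.sub hR
  rw [sum_sq_div_pow _ hm hmp, sub_self] at h0
  exact h0.intCast_dvd_num

theorem stmt7 (p m : ℕ) (hp : p.Prime) (hm : 0 < m) (hmp : m < p - 1) (heven : Even m) :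
    (p : ℤ) ∣ ((∑ k ∈ Finset.Icc 1 (p - 1), H k ^ 2 / (k : ℚ) ^ m)
      - (- ∑ j ∈ Finset.range (p - m), bernoulli j * bernoulli (p - 1 - m - j)
         - ∑ j ∈ Finset.Icc (p - m) (p - 2), bernoulli j * bernoulli (2 * p - 2 - m - j))).num :=
  stmt7_general p m hp hm hmp
end

section
/- Let p > 3 be a prime and 0 < m < p−1 an integer. Then ∑_{k=1}^{p-1} k^m H_k ≡ B_m − (p/(m+1)) S(m) (mod p²), where S(m) = ∑_{r=0}^m C(m+1,r) B_r B_{m-r}. -/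
/-!
With `P_r(n) = ∑_{k<n} k^r`, exchanging the order of summation gives
`∑_{0<k<p} k^m H_k = H_{p-1} P_m(p) - ∑_{0<j<p} P_m(j) / j`, and Faulhaber's formula expands
`P_m(j) / j` in powers of `j`. The result is the exact identity

  `∑ k^m H_k - B_m + p S(m)/(m+1)`
  `  = H_{p-1} P_m(p) - ∑_{i≤m} C(m+1,i) B_i (P_{m-i}(p) - p B_{m-i}) / (m+1)`.

Modulo `p²` the first term vanishes by Wolstenholme's theorem, and Faulhaber's formula once more
gives `P_r(p) ≡ p B_r` for `r ≤ p - 2`; the Bernoulli numbers involved are `p`-integral because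
their recursion only divides by integers smaller than `p`.
-/

open Finset

theorem Icc_one_sub_one_eq_Ico (n : ℕ) : Icc 1 (n - 1) = Ico 1 n := by
  ext
  simp only [mem_Icc, mem_Ico]
  omega

theorem two_mul_H_sub_one (n : ℕ) :
    2 * H (n - 1) = n * ∑ j ∈ Ico 1 n, 1 / ((j : ℚ) * (n - j)) := by
  have hH : H (n - 1) = ∑ j ∈ Ico 1 n, 1 / (j : ℚ) := by
    rw [H, Icc_one_sub_one_eq_Ico]
  have hreflect : ∑ j ∈ Ico 1 n, 1 / ((n : ℚ) - j) = ∑ j ∈ Ico 1 n, 1 / (j : ℚ) := by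
    have h := sum_Ico_reflect (fun j => 1 / (j : ℚ)) 1 (Nat.le_succ n)
    rw [Nat.add_sub_cancel_left, Nat.add_sub_cancel] at h
    rw [← h]
    refine sum_congr rfl fun j hj => ?_
    rw [Nat.cast_sub (mem_Ico.1 hj).2.le]
  rw [two_mul, hH]
  nth_rw 1 [← hreflect]
  rw [← sum_add_distrib, mul_sum]
  refine sum_congr rfl fun j hj => ?_
  have hj0 : (j : ℚ) ≠ 0 := by have := (mem_Ico.1 hj).1; positivity
  have hnj : (n : ℚ) - j ≠ 0 := sub_ne_zero.2 (by exact_mod_cast (mem_Ico.1 hj).2.ne')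
  field_simp
  ring

theorem sum_Ico_mul_H (f : ℕ → ℚ) (n : ℕ) :
    ∑ k ∈ Ico 1 n, f k * H k = ∑ j ∈ Ico 1 n, (∑ k ∈ Ico j n, f k) / j := by
  simp only [H, mul_sum, sum_div, mul_one_div]
  refine sum_comm' fun k j => ?_
  simp only [mem_Ico, mem_Icc]
  omega

/-- The sum includes `k = 0`, so `powerSum n 0 = n`. -/
def powerSum (n r : ℕ) : ℚ := ∑ k ∈ range n, (k : ℚ) ^ r

theorem sum_Ico_one_pow {n : ℕ} (hn : 0 < n) (r : ℕ) :
    ∑ j ∈ Ico 1 n, (j : ℚ) ^ r = powerSum n r - 0 ^ r := by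
  rw [powerSum, range_eq_Ico, sum_eq_sum_Ico_succ_bot hn, Nat.cast_zero, add_sub_cancel_left]

theorem powerSum_div {j : ℕ} (hj : j ≠ 0) (m : ℕ) :
    powerSum j m / j = ∑ i ∈ range (m + 1),
      ((m + 1).choose i : ℚ) * bernoulli i * (j : ℚ) ^ (m - i) / (m + 1) := by
  rw [powerSum, sum_range_pow, sum_div]
  refine sum_congr rfl fun i hi => ?_
  rw [Nat.sub_add_comm (Nat.lt_succ_iff.1 (mem_range.1 hi)), pow_succ]
  have : (j : ℚ) ≠ 0 := mod_cast hj
  field_simp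

theorem sum_choose_mul_bernoulli_mul_zero_pow (m : ℕ) :
    ∑ i ∈ range (m + 1), ((m + 1).choose i : ℚ) * bernoulli i * 0 ^ (m - i) =
      (m + 1) * bernoulli m := by
  rw [sum_range_succ, sum_eq_zero fun i hi => ?_, Nat.choose_succ_self_right, Nat.sub_self,
    pow_zero]
  · push_cast
    ring
  · rw [zero_pow (by have := mem_range.1 hi; omega), mul_zero]

theorem sum_Ico_pow_mul_H {n : ℕ} (hn : 0 < n) (m : ℕ) :
    ∑ k ∈ Ico 1 n, (k : ℚ) ^ m * H k = H (n - 1) * powerSum n m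
      - (∑ i ∈ range (m + 1), ((m + 1).choose i : ℚ) * bernoulli i * powerSum n (m - i))
        / (m + 1) + bernoulli m := by
  have htail : ∀ j ∈ Ico 1 n, (∑ k ∈ Ico j n, (k : ℚ) ^ m) / j
      = powerSum n m * (1 / j) - powerSum j m / j := by
    intro j hj
    rw [sum_Ico_eq_sub _ (mem_Ico.1 hj).2.le, powerSum, powerSum]
    ring
  have hhead : ∑ j ∈ Ico 1 n, powerSum j m / j = (∑ i ∈ range (m + 1),
      ((m + 1).choose i : ℚ) * bernoulli i * (powerSum n (m - i) - 0 ^ (m - i))) / (m + 1) := by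
    rw [sum_congr rfl fun j hj => powerSum_div (by have := (mem_Ico.1 hj).1; omega) m, sum_comm,
      sum_div]
    refine sum_congr rfl fun i _ => ?_
    rw [← sum_div, ← mul_sum, sum_Ico_one_pow hn]
  rw [sum_Ico_mul_H, sum_congr rfl htail, sum_sub_distrib, ← mul_sum, hhead, H,
    Icc_one_sub_one_eq_Ico]
  simp only [mul_sub, sum_sub_distrib, sum_choose_mul_bernoulli_mul_zero_pow]
  field_simp
  ring

section padicBall

variable (p : ℕ) [hp : Fact p.Prime]

/-- `q ∈ padicBall p k` iff `q ≡ 0 (mod p^k)` in `ℤ_(p)`. -/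
def padicBall (k : ℕ) : AddSubgroup ℚ where
  carrier := {q | padicNorm p q ≤ (p : ℚ) ^ (-(k : ℤ))}
  add_mem' ha hb := padicNorm.nonarchimedean.trans (max_le ha hb)
  zero_mem' := by simp only [Set.mem_ofPred_eq, padicNorm.zero]; positivity
  neg_mem' := by simp only [Set.mem_ofPred_eq, padicNorm.neg, imp_self, implies_true]

variable {p}

theorem mem_padicBall {k : ℕ} {q : ℚ} :
    q ∈ padicBall p k ↔ padicNorm p q ≤ (p : ℚ) ^ (-(k : ℤ)) :=
  Iff.rfl

theorem padicBall_antitone {j k : ℕ} (h : j ≤ k) : padicBall p k ≤ padicBall p j :=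
  fun _ hq => mem_padicBall.2 <| (mem_padicBall.1 hq).trans <|
    zpow_le_zpow_right₀ (mod_cast hp.out.one_le) (neg_le_neg (mod_cast h))

theorem mul_mem_padicBall {j k : ℕ} {a b : ℚ} (ha : a ∈ padicBall p j)
    (hb : b ∈ padicBall p k) : a * b ∈ padicBall p (j + k) := by
  rw [mem_padicBall, padicNorm.mul, Nat.cast_add, neg_add, zpow_add₀ (mod_cast hp.out.ne_zero)]
  exact mul_le_mul ha hb (padicNorm.nonneg _) (by positivity)

theorem intCast_mem_padicBall_iff {k : ℕ} {z : ℤ} :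
    (z : ℚ) ∈ padicBall p k ↔ (p : ℤ) ^ k ∣ z := by
  rw [mem_padicBall, ← padicNorm.dvd_iff_norm_le, Nat.cast_pow]

theorem natCast_mem_padicBall_zero (n : ℕ) : (n : ℚ) ∈ padicBall p 0 :=
  mod_cast intCast_mem_padicBall_iff.2 (by simp : (p : ℤ) ^ 0 ∣ n)

theorem pow_mem_padicBall (k : ℕ) : (p : ℚ) ^ k ∈ padicBall p k :=
  mod_cast intCast_mem_padicBall_iff.2 (by simp : (p : ℤ) ^ k ∣ (p : ℤ) ^ k)

theorem inv_natCast_mem_padicBall_zero {n : ℕ} (hn : ¬ p ∣ n) :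
    (n : ℚ)⁻¹ ∈ padicBall p 0 := by
  rw [mem_padicBall, ← one_div, padicNorm.div, padicNorm.one, (padicNorm.nat_eq_one_iff n).2 hn]
  simp

theorem div_natCast_mem_padicBall {k n : ℕ} {a : ℚ} (ha : a ∈ padicBall p k)
    (hn : ¬ p ∣ n) : a / n ∈ padicBall p k := by
  simpa only [add_zero, div_eq_mul_inv] using
    mul_mem_padicBall ha (inv_natCast_mem_padicBall_zero hn)

theorem dvd_num_of_mem_padicBall {k : ℕ} {q : ℚ} (hq : q ∈ padicBall p k) :
    (p : ℤ) ^ k ∣ q.num := by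
  have h : q * q.den ∈ padicBall p (k + 0) :=
    mul_mem_padicBall hq (natCast_mem_padicBall_zero _)
  rwa [Rat.mul_den_eq_num, add_zero, intCast_mem_padicBall_iff] at h

theorem bernoulli_mem_padicBall_zero {i : ℕ} (hi : i + 1 < p) :
    bernoulli i ∈ padicBall p 0 := by
  induction i using Nat.strong_induction_on with
  | _ i ih =>
    rcases Nat.eq_zero_or_pos i with rfl | hi0
    · simpa using natCast_mem_padicBall_zero (p := p) 1
    · -- the recursion `∑_{k ≤ i} C(i+1,k) B_k = 0` only divides by `i + 1`, a unit at `p`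
      have hrec := sum_bernoulli (i + 1)
      rw [if_neg (by omega), sum_range_succ, Nat.choose_succ_self_right] at hrec
      have hB : bernoulli i =
          -(∑ k ∈ range i, ((i + 1).choose k : ℚ) * bernoulli k) / (i + 1 : ℕ) := by
        rw [eq_div_iff (by positivity)]
        linarith
      rw [hB]
      refine div_natCast_mem_padicBall (neg_mem (sum_mem fun k hk => ?_))
        (Nat.not_dvd_of_pos_of_lt (by omega) hi)
      have hk := mem_range.1 hk
      simpa using mul_mem_padicBall (natCast_mem_padicBall_zero _) (ih k hk (by omega))

theorem powerSum_mem_padicBall_zero (n r : ℕ) : powerSum n r ∈ padicBall p 0 :=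
  sum_mem fun k _ => mod_cast natCast_mem_padicBall_zero (k ^ r)

/-- In Faulhaber's formula `P_r(p) = ∑_{i ≤ r} C(r+1,i) B_i p^{r+1-i}/(r+1)` every term but
`p B_r` carries `p²`. -/
theorem powerSum_sub_mul_bernoulli_mem_padicBall_two {r : ℕ} (hr : r + 1 < p) :
    powerSum p r - p * bernoulli r ∈ padicBall p 2 := by
  rw [powerSum, sum_range_pow, sum_range_succ, Nat.choose_succ_self_right,
    Nat.add_sub_cancel_left, pow_one]
  have htop : bernoulli r * ((r + 1 : ℕ) : ℚ) * p / (r + 1) = p * bernoulli r := by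
    push_cast
    field_simp
  rw [htop, add_sub_cancel_right]
  refine sum_mem fun i hi => ?_
  have hi := mem_range.1 hi
  have hterm : bernoulli i * ((r + 1).choose i : ℚ) * (p : ℚ) ^ (r + 1 - i) / (r + 1)
      = bernoulli i * ((r + 1).choose i : ℚ) * (p : ℚ) ^ (r + 1 - i) / (r + 1 : ℕ) := by
    push_cast
    ring
  have hmem : bernoulli i * ((r + 1).choose i : ℚ) * (p : ℚ) ^ (r + 1 - i)
      ∈ padicBall p (0 + 0 + (r + 1 - i)) :=
    mul_mem_padicBall (mul_mem_padicBall (bernoulli_mem_padicBall_zero (by omega))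
      (natCast_mem_padicBall_zero _)) (pow_mem_padicBall _)
  rw [hterm]
  exact div_natCast_mem_padicBall (padicBall_antitone (by omega) hmem)
    (Nat.not_dvd_of_pos_of_lt (by omega) hr)

theorem pow_sub_one_sub_one_mem_padicBall_one {j : ℕ} (hj : ¬ p ∣ j) :
    (j : ℚ) ^ (p - 1) - 1 ∈ padicBall p 1 := by
  have hcop : IsCoprime (j : ℤ) p :=
    Nat.isCoprime_iff_coprime.2 ((Nat.Prime.coprime_iff_not_dvd hp.out).2 hj).symm
  have h : (((j : ℤ) ^ (p - 1) - 1 : ℤ) : ℚ) ∈ padicBall p 1 :=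
    intCast_mem_padicBall_iff.2 (by simpa using Int.prime_dvd_pow_sub_one hp.out hcop)
  push_cast at h
  exact h

/-- Modulo `p`, `j (p - j) ≡ -j²` and `j^{p-1} ≡ 1`, so `1 / (j (p - j)) ≡ -j^{p-3}`. -/
theorem inv_mul_sub_add_pow_mem_padicBall_one (hp3 : 3 ≤ p) {j : ℕ} (hj0 : 0 < j)
    (hjp : j < p) :
    1 / ((j : ℚ) * (p - j)) + (j : ℚ) ^ (p - 3) ∈ padicBall p 1 := by
  have hnum : 1 / ((j : ℚ) * (p - j)) + (j : ℚ) ^ (p - 3)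
      = (p * (j : ℚ) ^ (p - 2) - ((j : ℚ) ^ (p - 1) - 1)) / (j * (p - j) : ℕ) := by
    have hj : (j : ℚ) ≠ 0 := by positivity
    have hpj : (p : ℚ) - j ≠ 0 := sub_ne_zero.2 (by exact_mod_cast hjp.ne')
    rw [Nat.cast_mul, Nat.cast_sub hjp.le, div_add' _ _ _ (mul_ne_zero hj hpj)]
    congr 1
    have h2 : (j : ℚ) ^ (p - 2) = (j : ℚ) ^ (p - 3) * j := by
      rw [← pow_succ]; congr 1; omega
    have h1 : (j : ℚ) ^ (p - 1) = (j : ℚ) ^ (p - 3) * j * j := by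
      rw [← pow_succ, ← pow_succ]; congr 1; omega
    rw [h1, h2]
    ring
  rw [hnum]
  refine div_natCast_mem_padicBall
    (sub_mem ?_ (pow_sub_one_sub_one_mem_padicBall_one ?_)) ?_
  · simpa using mul_mem_padicBall (pow_mem_padicBall 1) (natCast_mem_padicBall_zero (j ^ (p - 2)))
  · exact Nat.not_dvd_of_pos_of_lt hj0 hjp
  · rw [hp.out.dvd_mul, not_or]
    exact ⟨Nat.not_dvd_of_pos_of_lt hj0 hjp, Nat.not_dvd_of_pos_of_lt (by omega) (by omega)⟩

/-- Wolstenholme's theorem. -/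
theorem H_sub_one_mem_padicBall_two (hp3 : 3 < p) : H (p - 1) ∈ padicBall p 2 := by
  set W := ∑ j ∈ Ico 1 p, 1 / ((j : ℚ) * (p - j))
  have hpowerSum : ∑ j ∈ Ico 1 p, (j : ℚ) ^ (p - 3) ∈ padicBall p 1 := by
    have h : powerSum p (p - 3) - p * bernoulli (p - 3) ∈ padicBall p 1 :=
      padicBall_antitone one_le_two (powerSum_sub_mul_bernoulli_mem_padicBall_two (by omega))
    have hpB : (p : ℚ) * bernoulli (p - 3) ∈ padicBall p 1 := by
      simpa using mul_mem_padicBall (pow_mem_padicBall (p := p) 1)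
        (bernoulli_mem_padicBall_zero (p := p) (i := p - 3) (by omega))
    rw [sum_Ico_one_pow (by omega), zero_pow (by omega), sub_zero]
    simpa using add_mem h hpB
  have hW : W ∈ padicBall p 1 := by
    have h : W = ∑ j ∈ Ico 1 p, (1 / ((j : ℚ) * (p - j)) + (j : ℚ) ^ (p - 3))
        - ∑ j ∈ Ico 1 p, (j : ℚ) ^ (p - 3) := by
      rw [sum_add_distrib, add_sub_cancel_right]
    rw [h]
    refine sub_mem (sum_mem fun j hj => ?_) hpowerSum
    exact inv_mul_sub_add_pow_mem_padicBall_one hp3.le (mem_Ico.1 hj).1 (mem_Ico.1 hj).2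
  have hH : H (p - 1) = p * W / (2 : ℕ) := by
    rw [← two_mul_H_sub_one]
    push_cast
    ring
  rw [hH]
  refine div_natCast_mem_padicBall ?_ (Nat.not_dvd_of_pos_of_lt two_pos (by omega))
  simpa using mul_mem_padicBall (pow_mem_padicBall (p := p) 1) hW

end padicBall

theorem stmt8_general (p m : ℕ) (hp : p.Prime) (hp3 : 3 < p) (hmp : m < p - 1) :
    (p : ℤ) ^ 2 ∣ ((∑ k ∈ Finset.Icc 1 (p - 1), (k : ℚ) ^ m * H k)
      - (bernoulli m - (p : ℚ) / (m + 1) * S m)).num := by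
  have : Fact p.Prime := ⟨hp⟩
  refine dvd_num_of_mem_padicBall ?_
  have hS : (p : ℚ) / (m + 1) * S m = (∑ i ∈ range (m + 1),
      ((m + 1).choose i : ℚ) * bernoulli i * (p * bernoulli (m - i))) / (m + 1) := by
    rw [S, mul_sum, sum_div]
    exact sum_congr rfl fun i _ => by ring
  have hdiff : (∑ k ∈ Icc 1 (p - 1), (k : ℚ) ^ m * H k) - (bernoulli m - p / (m + 1) * S m)
      = H (p - 1) * powerSum p m - (∑ i ∈ range (m + 1), ((m + 1).choose i : ℚ) * bernoulli i
          * (powerSum p (m - i) - p * bernoulli (m - i))) / (m + 1 : ℕ) := by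
    rw [Icc_one_sub_one_eq_Ico, sum_Ico_pow_mul_H hp.pos, hS]
    simp only [mul_sub, sum_sub_distrib, sub_div]
    push_cast
    ring
  rw [hdiff]
  refine sub_mem ?_ (div_natCast_mem_padicBall (sum_mem fun i hi => ?_)
    (Nat.not_dvd_of_pos_of_lt m.succ_pos (by omega)))
  · simpa using mul_mem_padicBall (H_sub_one_mem_padicBall_two hp3)
      (powerSum_mem_padicBall_zero p m)
  · have hi := mem_range.1 hi
    simpa using mul_mem_padicBall (mul_mem_padicBall (natCast_mem_padicBall_zero _)
      (bernoulli_mem_padicBall_zero (p := p) (i := i) (by omega)))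
      (powerSum_sub_mul_bernoulli_mem_padicBall_two (p := p) (r := m - i) (by omega))

theorem stmt8 (p m : ℕ) (hp : p.Prime) (hp3 : 3 < p) (hm : 0 < m) (hmp : m < p - 1) :
    (p : ℤ) ^ 2 ∣ ((∑ k ∈ Finset.Icc 1 (p - 1), (k : ℚ) ^ m * H k)
      - (bernoulli m - (p : ℚ) / (m + 1) * S m)).num :=
  stmt8_general p m hp hp3 hmp
end

section
/- For every prime p > 3, ∑_{k=1}^{p-1} k² H_k² ≡ (79/108) p − 4/9 (mod p²), as rationals with denominators coprime to p. -/
open Finset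

/-!
Induction on `n` gives a closed form for `∑_{k ≤ n} k² H_k²` as a quadratic polynomial in `H_n`
with coefficients in `ℚ[n]`. At `n = p - 1` its constant term is `79p/108 - 4/9 + p²(8p - 39)/108`,
and the other two terms vanish modulo `p²` by Wolstenholme's theorem `H_{p-1} ≡ 0 (mod p²)`.
That theorem follows from pairing `k` with `p - k`: `2 H_{p-1} = p ∑ 1/(k(p-k))`, and modulo `p`
the last sum is `-∑ k⁻²`, which vanishes in `𝔽_p` because `∑_x x² = 0` there for `p > 3`.
All congruences are read as bounds on the `p`-adic norm.
-/

theorem ZMod.sum_Icc_natCast_eq_sum {M : Type*} [AddCommMonoid M] {p : ℕ} [NeZero p]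
    (f : ZMod p → M) (hf : f 0 = 0) : ∑ k ∈ Icc 1 (p - 1), f k = ∑ x, f x := by
  rw [sum_subset (s₂ := range p) (fun k hk => by simp at hk ⊢; omega)
    (fun k hk hk' => by
      obtain rfl : k = 0 := by simp at hk hk'; omega
      simpa using hf)]
  exact sum_nbij' (↑) ZMod.val (by simp) (by simp [ZMod.val_lt])
    (fun k hk => ZMod.val_cast_of_lt (mem_range.1 hk)) (fun x _ => ZMod.natCast_zmod_val x)
    (fun _ _ => rfl)

theorem ZMod.sum_inv_sq_eq_zero {p : ℕ} [Fact p.Prime] (hp : 3 < p) :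
    ∑ x : ZMod p, x⁻¹ ^ 2 = 0 :=
  (Equiv.sum_comp (Equiv.inv (ZMod p)) (· ^ 2)).trans
    (FiniteField.sum_pow_lt_card_sub_one (ZMod p) 2 (by rw [ZMod.card]; omega))

namespace PadicInt

variable {p : ℕ} [Fact p.Prime]

theorem coe_inv_of_norm_eq_one {z : ℤ_[p]} (hz : ‖z‖ = 1) :
    ((z.inv : ℤ_[p]) : ℚ_[p]) = (z : ℚ_[p])⁻¹ :=
  eq_inv_of_mul_eq_one_right (by rw [← coe_mul, mul_inv hz, coe_one])

theorem toZMod_inv_of_norm_eq_one {z : ℤ_[p]} (hz : ‖z‖ = 1) :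
    toZMod z.inv = (toZMod z)⁻¹ :=
  eq_inv_of_mul_eq_one_right (by rw [← map_mul, mul_inv hz, map_one])

theorem norm_lt_one_of_toZMod_eq_zero {z : ℤ_[p]} (hz : toZMod z = 0) : ‖z‖ < 1 :=
  mem_nonunits.1 <| (IsLocalRing.mem_maximalIdeal _).1 <| (ker_toZMod (p := p)) ▸
    RingHom.mem_ker.2 hz

end PadicInt

section Padic

variable {p : ℕ} [Fact p.Prime]

theorem Padic.norm_natCast_mul_of_coprime {m : ℕ} (hm : p.Coprime m) (x : ℚ_[p]) :
    ‖(m : ℚ_[p]) * x‖ = ‖x‖ := by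
  rw [norm_mul, Padic.norm_natCast_eq_one_iff.2 hm, one_mul]

theorem Rat.num_dvd_of_norm_le {r : ℚ} {n : ℕ} (hr : ‖(r : ℚ_[p])‖ ≤ (p : ℝ) ^ (-n : ℤ)) :
    (p : ℤ) ^ n ∣ r.num := by
  rw [← Padic.norm_int_le_pow_iff_dvd]
  calc ‖(r.num : ℚ_[p])‖ = ‖(r : ℚ_[p])‖ * ‖(r.den : ℚ_[p])‖ := by
        rw [← norm_mul]; congr 1; exact_mod_cast r.mul_den_eq_num.symm
    _ ≤ (p : ℝ) ^ (-n : ℤ) * 1 := by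
        gcongr; exact_mod_cast Padic.norm_int_le_one (p := p) (r.den : ℤ)
    _ = _ := mul_one _

theorem norm_int_mul_sq_add_int_mul_add_le {h : ℚ} {n : ℕ}
    (hh : ‖(h : ℚ_[p])‖ ≤ (p : ℝ) ^ (-n : ℤ)) (a b c : ℤ) :
    ‖((a * h ^ 2 + b * h + p ^ n * c : ℚ) : ℚ_[p])‖ ≤ (p : ℝ) ^ (-n : ℤ) := by
  have h1 : ‖(h : ℚ_[p])‖ ≤ 1 := hh.trans <|
    zpow_le_one_of_nonpos₀ (by exact_mod_cast (Fact.out : p.Prime).one_le) (by omega)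
  push_cast
  refine (IsUltrametricDist.norm_add_le_max _ _).trans <| max_le
    ((IsUltrametricDist.norm_add_le_max _ _).trans <| max_le ?_ ?_) ?_
  · calc ‖(a : ℚ_[p]) * (h : ℚ_[p]) ^ 2‖ = ‖(a : ℚ_[p])‖ * ‖(h : ℚ_[p])‖ * ‖(h : ℚ_[p])‖ := by
          rw [norm_mul, norm_pow, sq, mul_assoc]
      _ ≤ 1 * 1 * (p : ℝ) ^ (-n : ℤ) := by gcongr; exact Padic.norm_int_le_one a
      _ = _ := by ring
  · calc ‖(b : ℚ_[p]) * h‖ ≤ 1 * (p : ℝ) ^ (-n : ℤ) := by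
          rw [norm_mul]; gcongr; exact Padic.norm_int_le_one b
      _ = _ := one_mul _
  · calc ‖(p : ℚ_[p]) ^ n * c‖ ≤ (p : ℝ) ^ (-n : ℤ) * 1 := by
          rw [norm_mul, Padic.norm_p_pow]; gcongr; exact Padic.norm_int_le_one c
      _ = _ := mul_one _

end Padic

theorem H_succ (n : ℕ) : H (n + 1) = H n + 1 / (n + 1 : ℚ) := by
  rw [H, H, sum_Icc_succ_top (by omega)]
  push_cast
  ring

theorem two_mul_H (n : ℕ) :
    2 * H n = (n + 1) * ∑ k ∈ Icc 1 n, ((k : ℚ) * (n + 1 - k))⁻¹ := by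
  have hreflect : H n = ∑ k ∈ Icc 1 n, 1 / ((n : ℚ) + 1 - k) := by
    refine sum_nbij' (n + 1 - ·) (n + 1 - ·) ?_ ?_ ?_ ?_ ?_ <;> intro k hk <;>
      simp only [mem_Icc] at hk ⊢
    · omega
    · omega
    · omega
    · omega
    · rw [Nat.cast_sub (by omega)]; push_cast; ring
  rw [two_mul, mul_sum]
  nth_rw 2 [hreflect]
  rw [H, ← sum_add_distrib]
  refine sum_congr rfl fun k hk => ?_
  have hk : 1 ≤ k ∧ k ≤ n := mem_Icc.1 hk
  have hk0 : (k : ℚ) ≠ 0 := by exact_mod_cast (by omega : k ≠ 0)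
  have hnk : (n : ℚ) + 1 - k ≠ 0 := by
    rw [← Nat.cast_succ, ← Nat.cast_sub (by omega)]; exact_mod_cast (by omega : n + 1 - k ≠ 0)
  field_simp
  ring

theorem sum_sq_mul_H_sq (n : ℕ) :
    ∑ k ∈ Icc 1 n, (k : ℚ) ^ 2 * H k ^ 2 =
      (2 * (n : ℚ) ^ 3 + 3 * (n : ℚ) ^ 2 + n) / 6 * H n ^ 2
      + (-4 * (n : ℚ) ^ 3 + 3 * (n : ℚ) ^ 2 + (n : ℚ) - 3) / 18 * H n
      + (8 * (n : ℚ) ^ 3 - 15 * (n : ℚ) ^ 2 + 25 * (n : ℚ)) / 108 := by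
  induction n with
  | zero => simp [H]
  | succ n ih =>
    rw [sum_Icc_succ_top (by omega), ih, H_succ]
    push_cast
    field_simp
    ring

section Wolstenholme

variable {p : ℕ} [Fact p.Prime]

theorem norm_sum_inv_mul_sub_le (hp : 3 < p) :
    ‖∑ k ∈ Icc 1 (p - 1), ((k : ℚ_[p]) * (p - k))⁻¹‖ ≤ (p : ℝ) ^ (-1 : ℤ) := by
  rw [Padic.norm_le_pow_iff_norm_lt_pow_add_one, neg_add_cancel, zpow_zero]
  set u : ℕ → ℤ_[p] := fun k => k * (p - k)
  have hu : ∀ k ∈ Icc 1 (p - 1), ‖u k‖ = 1 := fun k hk => by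
    have hk : 1 ≤ k ∧ k ≤ p - 1 := mem_Icc.1 hk
    have hcop : p.Coprime (k * (p - k)) :=
      (Nat.coprime_of_lt_prime (by omega) (by omega) Fact.out).mul_right
        (Nat.coprime_of_lt_prime (by omega) (by omega) Fact.out)
    simpa [u, Nat.cast_sub (by omega : k ≤ p)] using PadicInt.norm_natCast_eq_one_iff.2 hcop
  have hcoe : ((∑ k ∈ Icc 1 (p - 1), (u k).inv : ℤ_[p]) : ℚ_[p]) =
      ∑ k ∈ Icc 1 (p - 1), ((k : ℚ_[p]) * (p - k))⁻¹ := by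
    rw [PadicInt.coe_sum]
    refine sum_congr rfl fun k hk => ?_
    simp [PadicInt.coe_inv_of_norm_eq_one (hu k hk), u]
  rw [← hcoe, ← PadicInt.norm_def]
  refine PadicInt.norm_lt_one_of_toZMod_eq_zero ?_
  calc PadicInt.toZMod (∑ k ∈ Icc 1 (p - 1), (u k).inv)
      = ∑ k ∈ Icc 1 (p - 1), -((k : ZMod p)⁻¹ ^ 2) := by
        rw [map_sum]
        refine sum_congr rfl fun k hk => ?_
        simp [PadicInt.toZMod_inv_of_norm_eq_one (hu k hk), u, sq]
    _ = 0 := by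
      rw [sum_neg_distrib, ZMod.sum_Icc_natCast_eq_sum (· ⁻¹ ^ 2) (by simp),
        ZMod.sum_inv_sq_eq_zero hp, neg_zero]

theorem norm_H_sub_one_le (hp : 3 < p) : ‖(H (p - 1) : ℚ_[p])‖ ≤ (p : ℝ) ^ (-2 : ℤ) := by
  have hpair : (2 : ℚ_[p]) * H (p - 1) = p * ∑ k ∈ Icc 1 (p - 1), ((k : ℚ_[p]) * (p - k))⁻¹ := by
    have := two_mul_H (p - 1)
    rw [Nat.cast_pred (Fact.out : p.Prime).pos, sub_add_cancel] at this
    simpa using congrArg (Rat.cast : ℚ → ℚ_[p]) this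
  have htwo : p.Coprime 2 := (Nat.coprime_primes Fact.out Nat.prime_two).2 (by omega)
  calc ‖(H (p - 1) : ℚ_[p])‖ = ‖(2 : ℚ_[p]) * H (p - 1)‖ := by
        exact_mod_cast (Padic.norm_natCast_mul_of_coprime htwo _).symm
    _ ≤ (p : ℝ) ^ (-1 : ℤ) * (p : ℝ) ^ (-1 : ℤ) := by
      rw [hpair, norm_mul, Padic.norm_p, ← zpow_neg_one]
      gcongr
      exact norm_sum_inv_mul_sub_le hp
    _ = (p : ℝ) ^ (-2 : ℤ) := by
      rw [← zpow_add₀ (by exact_mod_cast (Fact.out : p.Prime).ne_zero)]; norm_num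

end Wolstenholme

theorem stmt9 (p : ℕ) (hp : p.Prime) (hp3 : 3 < p) :
    (p : ℤ) ^ 2 ∣ ((∑ k ∈ Finset.Icc 1 (p - 1), (k : ℚ) ^ 2 * H k ^ 2)
      - (79 / 108 * (p : ℚ) - 4 / 9)).num := by
  have := Fact.mk hp
  have hcop : p.Coprime 108 := by
    have h2 := (Nat.coprime_primes hp Nat.prime_two).2 (by omega)
    have h3 := (Nat.coprime_primes hp Nat.prime_three).2 (by omega)
    simpa using (h2.pow_right 2).mul_right (h3.pow_right 3)
  have hclosed : 108 * ((∑ k ∈ Finset.Icc 1 (p - 1), (k : ℚ) ^ 2 * H k ^ 2)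
      - (79 / 108 * (p : ℚ) - 4 / 9)) =
      ((18 * p * (p - 1) * (2 * p - 1) : ℤ) : ℚ) * H (p - 1) ^ 2
      + ((6 * (-4 * p ^ 3 + 15 * p ^ 2 - 17 * p + 3) : ℤ) : ℚ) * H (p - 1)
      + (p : ℚ) ^ 2 * ((8 * p - 39 : ℤ) : ℚ) := by
    rw [sum_sq_mul_H_sq, Nat.cast_pred hp.pos]
    push_cast
    ring
  apply Rat.num_dvd_of_norm_le
  rw [← Padic.norm_natCast_mul_of_coprime hcop]
  exact_mod_cast hclosed ▸ norm_int_mul_sq_add_int_mul_add_le (norm_H_sub_one_le hp3) _ _ _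
end

section
/- For every prime p > 5, ∑_{k=1}^{p-1} k⁴ H_k² ≡ (5743/27000) p − 7/225 (mod p²), as rationals with denominators coprime to p. -/
open Finset

/-!
The sum has a closed form, quadratic in `H n` with coefficients polynomial in `n` (checked by
induction on `n`). At `n = p - 1` the coefficients are `p`-integral, so Wolstenholme's theorem
`H (p - 1) ≡ 0 (mod p²)` kills the terms involving `H (p - 1)` and leaves the constant term,
which is `5743/27000 p - 7/225` modulo `p²`.

Wolstenholme's theorem comes from pairing `j` with `p - j`: `2 H (p - 1) = p ∑ 1/(j (p - j))`, and
`∑ 1/(j (p - j)) ≡ -∑ 1/j² ≡ -∑ j^(p-3) ≡ 0 (mod p)` by Fermat and the vanishing of power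
sums over `ZMod p`. Congruences between rationals are expressed with `padicNorm`.
-/

theorem sum_Icc_pow_four_mul_H_sq (n : ℕ) :
    ∑ k ∈ Icc 1 n, (k : ℚ) ^ 4 * H k ^ 2 =
      ((n : ℚ) ^ 5 / 5 + (n : ℚ) ^ 4 / 2 + (n : ℚ) ^ 3 / 3 - (n : ℚ) / 30) * H n ^ 2
      + (-2 * (n : ℚ) ^ 5 / 25 + (n : ℚ) ^ 4 / 20 + 13 * (n : ℚ) ^ 3 / 90 - (n : ℚ) ^ 2 / 12
          - 7 * (n : ℚ) / 225 + 1 / 30) * H n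
      + (2 * (n : ℚ) ^ 5 / 125 - 9 * (n : ℚ) ^ 4 / 400 + 109 * (n : ℚ) ^ 3 / 5400
          - 7 * (n : ℚ) ^ 2 / 720 - 1007 * (n : ℚ) / 27000) := by
  induction n with
  | zero => simp [H]
  | succ n ih =>
    have hH : H (n + 1) = H n + 1 / ((n : ℚ) + 1) := by
      rw [H, H, sum_Icc_succ_top (by omega)]; push_cast; ring
    rw [sum_Icc_succ_top (by omega), ih, hH]
    push_cast
    field_simp
    ring

theorem sum_Icc_reflect {M : Type*} [AddCommMonoid M] (f : ℕ → M) (n : ℕ) :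
    ∑ j ∈ Icc 1 (n - 1), f (n - j) = ∑ j ∈ Icc 1 (n - 1), f j := by
  refine sum_nbij' (n - ·) (n - ·) ?_ ?_ ?_ ?_ fun _ _ => rfl <;>
    intro j hj <;> simp only [mem_Icc] at hj ⊢ <;> omega

theorem cast_sub_of_mem_Icc {n j : ℕ} (hj : j ∈ Icc 1 (n - 1)) :
    ((n - j : ℕ) : ℚ) = n - j :=
  Nat.cast_sub (by grind)

theorem ne_zero_and_sub_ne_zero_of_mem_Icc {n j : ℕ} (hj : j ∈ Icc 1 (n - 1)) :
    (j : ℚ) ≠ 0 ∧ (n : ℚ) - j ≠ 0 := by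
  obtain ⟨hj1, hjn⟩ := mem_Icc.mp hj
  exact ⟨Nat.cast_ne_zero.mpr (by omega), sub_ne_zero.mpr (Nat.cast_injective.ne (by omega))⟩

theorem two_mul_H_pred (n : ℕ) :
    2 * H (n - 1) = n * ∑ j ∈ Icc 1 (n - 1), 1 / ((j : ℚ) * (n - j)) := by
  have hrev : H (n - 1) = ∑ j ∈ Icc 1 (n - 1), 1 / ((n : ℚ) - j) := by
    rw [H, ← sum_Icc_reflect]
    refine sum_congr rfl fun j hj => by rw [cast_sub_of_mem_Icc hj]
  rw [two_mul]
  nth_rewrite 2 [hrev]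
  rw [H, ← sum_add_distrib, mul_sum]
  refine sum_congr rfl fun j hj => ?_
  obtain ⟨hj0, hnj⟩ := ne_zero_and_sub_ne_zero_of_mem_Icc hj
  field_simp
  ring

theorem sum_inv_mul_sub_add_Hgen_two (n : ℕ) :
    ∑ j ∈ Icc 1 (n - 1), 1 / ((j : ℚ) * (n - j)) + Hgen (n - 1) 2
      = n * ∑ j ∈ Icc 1 (n - 1), 1 / ((j : ℚ) ^ 2 * (n - j)) := by
  rw [Hgen, ← sum_add_distrib, mul_sum]
  refine sum_congr rfl fun j hj => ?_
  obtain ⟨hj0, hnj⟩ := ne_zero_and_sub_ne_zero_of_mem_Icc hj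
  field_simp
  ring

theorem Nat.Prime.dvd_sum_Icc_pow {p k : ℕ} (hp : p.Prime) (hk0 : 0 < k) (hk : k < p - 1) :
    p ∣ ∑ j ∈ Icc 1 (p - 1), j ^ k := by
  have := Fact.mk hp
  rw [← ZMod.natCast_eq_zero_iff, Nat.cast_sum]
  have hrange : range p = insert 0 (Icc 1 (p - 1)) := by
    ext x; simp only [mem_range, mem_insert, mem_Icc]; omega
  calc ∑ j ∈ Icc 1 (p - 1), ((j ^ k : ℕ) : ZMod p)
      = ∑ j ∈ range p, ((j : ℕ) : ZMod p) ^ k := by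
        rw [hrange, sum_insert (by simp), Nat.cast_zero, zero_pow hk0.ne', zero_add]
        push_cast; rfl
    _ = ∑ x : ZMod p, x ^ k := by
        refine sum_nbij' (fun j => (j : ZMod p)) ZMod.val (by simp)
          (fun x _ => mem_range.mpr (ZMod.val_lt x)) (fun j hj => ZMod.val_cast_of_lt
          (mem_range.mp hj)) (fun x _ => ZMod.natCast_zmod_val x) fun _ _ => rfl
    _ = 0 := FiniteField.sum_pow_lt_card_sub_one (K := ZMod p) k (by rwa [ZMod.card])

section padicNorm

variable {p : ℕ} [hp : Fact p.Prime]

theorem pow_dvd_num_of_padicNorm_le {q : ℚ} {n : ℕ} (h : padicNorm p q ≤ (p : ℚ)⁻¹ ^ n) :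
    (p : ℤ) ^ n ∣ q.num := by
  have hnum : padicNorm p (q.num : ℚ) ≤ (p : ℚ) ^ (-n : ℤ) := by
    rw [← Rat.mul_den_eq_num, padicNorm.mul, zpow_neg, zpow_natCast, ← inv_pow]
    exact (mul_le_of_le_one_right (padicNorm.nonneg q) (padicNorm.of_nat _)).trans h
  exact_mod_cast padicNorm.dvd_iff_norm_le.mpr hnum

theorem padicNorm_intCast_le_inv_of_dvd {z : ℤ} (h : (p : ℤ) ∣ z) :
    padicNorm p (z : ℚ) ≤ (p : ℚ)⁻¹ := by
  simpa using padicNorm.dvd_iff_norm_le (n := 1).mp (by simpa using h)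

theorem padicNorm_natCast_of_pos_of_lt {j : ℕ} (h0 : 0 < j) (hj : j < p) :
    padicNorm p (j : ℚ) = 1 :=
  (padicNorm.nat_eq_one_iff j).mpr fun h => (Nat.le_of_dvd h0 h).not_gt hj

theorem padicNorm_inv_sq_mul_sub_of_mem_Icc {j : ℕ} (hj : j ∈ Icc 1 (p - 1)) :
    padicNorm p (1 / ((j : ℚ) ^ 2 * (p - j))) = 1 := by
  obtain ⟨hj1, hjp⟩ := mem_Icc.mp hj
  rw [← cast_sub_of_mem_Icc hj, padicNorm.div, padicNorm.mul, pow_two, padicNorm.mul,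
    padicNorm_natCast_of_pos_of_lt (by omega) (by omega),
    padicNorm_natCast_of_pos_of_lt (p := p) (j := p - j) (by omega) (by omega)]
  simp

theorem padicNorm_inv_pow_sub_pow_le {j k m : ℕ} (hj : j ∈ Icc 1 (p - 1))
    (hkm : m + k = p - 1) :
    padicNorm p (1 / (j : ℚ) ^ k - (j : ℚ) ^ m) ≤ (p : ℚ)⁻¹ := by
  obtain ⟨hj1, hjp⟩ := mem_Icc.mp hj
  have hfermat : (p : ℤ) ∣ 1 - (j : ℤ) ^ (p - 1) :=
    (Int.ModEq.pow_card_sub_one_eq_one hp.out (Nat.isCoprime_iff_coprime.mpr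
      (Nat.coprime_of_lt_prime (by omega) (by omega) hp.out).symm)).dvd
  have hsplit :
      1 / (j : ℚ) ^ k - (j : ℚ) ^ m = ((1 - (j : ℤ) ^ (p - 1) : ℤ) : ℚ) / (j : ℚ) ^ k := by
    have hj0 : (j : ℚ) ≠ 0 := Nat.cast_ne_zero.mpr (by omega)
    rw [← hkm]
    push_cast
    field_simp
    ring
  rw [hsplit, padicNorm.div, IsAbsoluteValue.abv_pow (padicNorm p),
    padicNorm_natCast_of_pos_of_lt (by omega) (by omega), one_pow, div_one]
  exact padicNorm_intCast_le_inv_of_dvd hfermat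

theorem padicNorm_mul_le_of_le_one {a : ℚ} (ha : padicNorm p a ≤ 1) (x : ℚ) :
    padicNorm p (a * x) ≤ padicNorm p x := by
  rw [padicNorm.mul]
  exact mul_le_of_le_one_left (padicNorm.nonneg x) ha

theorem padicNorm_Hgen_le {k : ℕ} (hk0 : 0 < k) (hk : k < p - 1) :
    padicNorm p (Hgen (p - 1) k) ≤ (p : ℚ)⁻¹ := by
  have hsplit : Hgen (p - 1) k = ((∑ j ∈ Icc 1 (p - 1), j ^ (p - 1 - k) : ℕ) : ℤ)
      + ∑ j ∈ Icc 1 (p - 1), (1 / (j : ℚ) ^ k - (j : ℚ) ^ (p - 1 - k)) := by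
    rw [Hgen, sum_sub_distrib]
    push_cast
    ring
  rw [hsplit]
  refine padicNorm.nonarchimedean.trans (max_le ?_ ?_)
  · exact padicNorm_intCast_le_inv_of_dvd
      (Int.natCast_dvd_natCast.mpr (hp.out.dvd_sum_Icc_pow (by omega) (by omega)))
  · exact padicNorm.sum_le' (fun j hj => padicNorm_inv_pow_sub_pow_le hj (by omega))
      (by positivity)

theorem padicNorm_H_pred_le (hp3 : 3 < p) : padicNorm p (H (p - 1)) ≤ (p : ℚ)⁻¹ ^ 2 := by
  set G := ∑ j ∈ Icc 1 (p - 1), 1 / ((j : ℚ) * (p - j))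
  have hG : padicNorm p G ≤ (p : ℚ)⁻¹ := by
    have hGH : padicNorm p (G + Hgen (p - 1) 2) ≤ (p : ℚ)⁻¹ := by
      rw [sum_inv_mul_sub_add_Hgen_two, padicNorm.mul, padicNorm.padicNorm_p_of_prime]
      exact mul_le_of_le_one_right (by positivity) (padicNorm.sum_le'
        (fun j hj => (padicNorm_inv_sq_mul_sub_of_mem_Icc hj).le) zero_le_one)
    calc padicNorm p G = padicNorm p (G + Hgen (p - 1) 2 - Hgen (p - 1) 2) := by ring_nf
      _ ≤ (p : ℚ)⁻¹ :=
        padicNorm.sub.trans (max_le hGH (padicNorm_Hgen_le two_pos (by omega)))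
  have h2 : padicNorm p (2 : ℚ) = 1 := by
    exact_mod_cast padicNorm_natCast_of_pos_of_lt (p := p) two_pos (by omega)
  calc padicNorm p (H (p - 1)) = padicNorm p (2 * H (p - 1)) := by
        rw [padicNorm.mul, h2, one_mul]
    _ = (p : ℚ)⁻¹ * padicNorm p G := by
        rw [two_mul_H_pred, padicNorm.mul, padicNorm.padicNorm_p_of_prime]
    _ ≤ (p : ℚ)⁻¹ ^ 2 := by
        rw [sq]
        gcongr

theorem padicNorm_mul_add_mul_add_pow_mul_le {h : ℚ} {n : ℕ}
    (hh : padicNorm p h ≤ (p : ℚ)⁻¹ ^ n) (a b c : ℤ) :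
    padicNorm p ((a * h + b) * h + (p : ℚ) ^ n * c) ≤ (p : ℚ)⁻¹ ^ n := by
  have hh1 : padicNorm p h ≤ 1 :=
    hh.trans (pow_le_one₀ (by positivity) (inv_le_one_of_one_le₀ (mod_cast hp.out.one_lt.le)))
  have hlin : padicNorm p (a * h + b) ≤ 1 := padicNorm.nonarchimedean.trans
    (max_le ((padicNorm_mul_le_of_le_one (padicNorm.of_int a) h).trans hh1) (padicNorm.of_int b))
  refine padicNorm.nonarchimedean.trans (max_le ((padicNorm_mul_le_of_le_one hlin h).trans hh) ?_)
  rw [mul_comm, padicNorm.mul, IsAbsoluteValue.abv_pow (padicNorm p),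
    padicNorm.padicNorm_p_of_prime]
  exact mul_le_of_le_one_left (by positivity) (padicNorm.of_int c)

end padicNorm

theorem stmt17 (p : ℕ) (hp : p.Prime) (hp5 : 5 < p) :
    (p : ℤ) ^ 2 ∣ ((∑ k ∈ Finset.Icc 1 (p - 1), (k : ℚ) ^ 4 * H k ^ 2)
      - (5743 / 27000 * (p : ℚ) - 7 / 225)).num := by
  have := Fact.mk hp
  -- `54000` clears the denominators of the closed form at `n = p - 1`.
  have key : (54000 : ℚ) * ((∑ k ∈ Icc 1 (p - 1), (k : ℚ) ^ 4 * H k ^ 2)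
        - (5743 / 27000 * (p : ℚ) - 7 / 225))
      = (((10800 * p ^ 5 - 27000 * p ^ 4 + 18000 * p ^ 3 - 1800 * p : ℤ) : ℚ) * H (p - 1)
          + ((-4320 * p ^ 5 + 24300 * p ^ 4 - 46200 * p ^ 3 + 31500 * p ^ 2 - 1680 * p - 1800
            : ℤ) : ℚ)) * H (p - 1)
        + (p : ℚ) ^ 2 * ((864 * p ^ 3 - 5535 * p ^ 2 + 14590 * p - 19725 : ℤ) : ℚ) := by
    rw [sum_Icc_pow_four_mul_H_sq, Nat.cast_pred hp.pos]
    push_cast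
    ring
  have h54000 : padicNorm p (54000 : ℚ) = 1 := by
    have hndvd : ¬ p ∣ 2 ^ 4 * 3 ^ 3 * 5 ^ 3 := by
      simp only [hp.dvd_mul, not_or]
      refine ⟨⟨?_, ?_⟩, ?_⟩ <;> intro hd <;>
        linarith [Nat.le_of_dvd (by norm_num) (hp.dvd_of_dvd_pow hd)]
    exact_mod_cast (padicNorm.nat_eq_one_iff _).mpr hndvd
  apply pow_dvd_num_of_padicNorm_le
  rw [← one_mul (padicNorm p _), ← h54000, ← padicNorm.mul, key]
  exact padicNorm_mul_add_mul_add_pow_mul_le (padicNorm_H_pred_le (by omega)) _ _ _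
end
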